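/- arXiv:1005.5663 — 13 statements merged into one kernel-verified Lean document; each statement's English description precedes it below -/
import Mathlib

section
/- Let I ⊆ ℚ[X] = ℚ[x₁,…,x_n] be a zero-dimensional radical ideal. Then there exists a non-empty Zariski-open subset U ⊆ ℚ^{n-1} (i.e. the complement of the zero set of some nonzero polynomial in n−1 variables over ℚ) such that for all a = (a₁,…,a_{n-1}) ∈ U, the linear coordinate change φ_a : ℚ[X] → ℚ[X] defined by φ_a(xᵢ) = xᵢ for i = 1,…,n−1 and φ_a(x_n) = x_n + Σ_{i=1}^{n-1} aᵢxᵢ satisfies dim_ℚ(ℚ[X]/φ_a(I)) = dim_ℚ(ℚ[x_n]/(φ_a(I) ∩ ℚ[x_n])). -/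
/-!
Let `A = ℚ[X]/I`, a reduced finite `ℚ`-algebra of dimension `d`, so that it has `d` distinct
`ℚ`-algebra maps `σᵢ` into an algebraic closure. The coordinate change `φ_a` identifies
`ℚ[X]/φ_a(I)` with `A` and `ℚ[xₙ]/(φ_a(I) ∩ ℚ[xₙ])` with the subalgebra generated by
`z_a = xₙ - Σ aᵢxᵢ mod I`, so it suffices that `1, z_a, …, z_a^{d-1}` be a basis of `A`.
Their determinant in a fixed basis of `A` is a polynomial `c(a)` with rational coefficients.
It does not vanish identically: for generic `a` the values `σᵢ(z_a)` are pairwise distinct,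
and then the Vandermonde determinant makes the powers of `z_a` linearly independent.
-/

open MvPolynomial TensorProduct

section AlgHomCount

variable (K L A : Type*) [Field K] [PerfectField K] [Field L] [IsAlgClosed L] [Algebra K L]
  [CommRing A] [Algebra K A] [Module.Finite K A] [IsReduced A]

theorem exists_injective_fin_finrank_algHom :
    ∃ σ : Fin (Module.finrank K A) → (A →ₐ[K] L), Function.Injective σ := by
  have : IsArtinianRing A := isArtinian_of_tower K inferInstance
  have : Fintype (MaximalSpectrum A) := Fintype.ofFinite _
  let (m : MaximalSpectrum A) : Field (A ⧸ m.asIdeal) := Ideal.Quotient.field m.asIdeal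
  let Φ : (Σ m : MaximalSpectrum A, (A ⧸ m.asIdeal →ₐ[K] L)) → (A →ₐ[K] L) :=
    fun p => p.2.comp (Ideal.Quotient.mkₐ K p.1.asIdeal)
  have hker (p) : RingHom.ker (Φ p) = p.1.asIdeal := by
    rw [← Ideal.mk_ker (I := p.1.asIdeal)]
    exact RingHom.ker_comp_of_injective _ p.2.injective
  have hΦ : Function.Injective Φ := by
    rintro ⟨m, f⟩ ⟨m', f'⟩ h
    obtain rfl : m = m' :=
      MaximalSpectrum.ext (by rw [← hker ⟨m, f⟩, ← hker ⟨m', f'⟩, h])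
    obtain rfl : f = f' := Ideal.Quotient.algHom_ext K h
    rfl
  have hcard : Fintype.card (Σ m : MaximalSpectrum A, (A ⧸ m.asIdeal →ₐ[K] L)) =
      Module.finrank K A := by
    rw [Fintype.card_sigma, ((IsArtinianRing.equivPi A).restrictScalars K).toLinearEquiv.finrank_eq,
      Module.finrank_pi_fintype]
    exact Finset.sum_congr rfl fun m _ => AlgHom.card K _ L
  exact ⟨Φ ∘ (Fintype.equivFinOfCardEq hcard).symm, hΦ.comp (Equiv.injective _)⟩

end AlgHomCount

theorem linearIndependent_pow_of_injective_algHom {K L A : Type*} [Field K] [CommRing L]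
    [IsDomain L] [Algebra K L] [CommRing A] [Algebra K A] {d : ℕ} (σ : Fin d → (A →ₐ[K] L))
    {z : A} (hz : Function.Injective fun i => σ i z) :
    LinearIndependent K fun j : Fin d => z ^ (j : ℕ) := by
  rw [Fintype.linearIndependent_iff]
  intro g hg
  have hvanish (i : Fin d) : ∑ j, algebraMap K L (g j) * σ i z ^ (j : ℕ) = 0 := by
    simpa [map_sum, Algebra.smul_def] using congrArg (σ i) hg
  have := Matrix.eq_zero_of_forall_index_sum_mul_pow_eq_zero hz hvanish
  intro j
  simpa using congrFun this j

theorem MvPolynomial.exists_eval_algebraMap_ne_zero {K L σ : Type*} [CommRing K] [Infinite K]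
    [CommRing L] [IsDomain L] [Algebra K L] [FaithfulSMul K L] {p : MvPolynomial σ L}
    (hp : p ≠ 0) : ∃ a : σ → K, eval (algebraMap K L ∘ a) p ≠ 0 := by
  by_contra! h
  refine hp (funext_set (fun _ => Set.range (algebraMap K L))
    (fun _ => Set.infinite_range_of_injective (FaithfulSMul.algebraMap_injective K L))
    fun x hx => ?_)
  choose a ha using fun i => hx i trivial
  have hxa : x = algebraMap K L ∘ a := _root_.funext fun i => (ha i).symm
  rw [hxa, h a, map_zero]

open Finset in
theorem exists_injective_algHom_apply_sub_sum_smul {K L A κ : Type*} [Field K] [Infinite K]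
    [Field L] [Algebra K L] [CommRing A] [Algebra K A] [Fintype κ] {u : κ → A} {w : A}
    (hgen : Algebra.adjoin K (Set.range u ∪ {w}) = ⊤) {d : ℕ} {σ : Fin d → (A →ₐ[K] L)}
    (hσ : Function.Injective σ) :
    ∃ a : κ → K, Function.Injective fun i => σ i (w - ∑ k, a k • u k) := by
  classical
  let ℓ (i : Fin d) : MvPolynomial κ L := C (σ i w) - ∑ k, C (σ i (u k)) * X k
  have heval (i : Fin d) (x : κ → L) : eval x (ℓ i) = σ i w - ∑ k, σ i (u k) * x k := by
    simp [ℓ]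
  have hℓ : Function.Injective ℓ := by
    intro i j h
    have hw : σ i w = σ j w := by
      simpa only [heval, Pi.zero_apply, mul_zero, sum_const_zero, sub_zero] using
        congrArg (eval 0) h
    refine hσ (AlgHom.ext_of_adjoin_eq_top hgen ?_)
    rintro x (⟨k, rfl⟩ | rfl)
    · simpa [heval, hw, Pi.single_apply] using congrArg (eval (Pi.single k 1)) h
    · exact hw
  have hP : ∏ p ∈ univ.offDiag, (ℓ p.1 - ℓ p.2) ≠ 0 :=
    prod_ne_zero_iff.mpr fun p hp => sub_ne_zero.mpr (hℓ.ne (mem_offDiag.mp hp).2.2)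
  obtain ⟨a, ha⟩ := exists_eval_algebraMap_ne_zero (K := K) hP
  have heval_a (i : Fin d) :
      eval (algebraMap K L ∘ a) (ℓ i) = σ i (w - ∑ k, a k • u k) := by
    simp [heval, Algebra.smul_def, mul_comm]
  refine ⟨a, fun i j hij => by_contra fun hne => ha ?_⟩
  rw [map_prod]
  refine prod_eq_zero (s := univ.offDiag) (i := (i, j))
    (mem_offDiag.mpr ⟨mem_univ i, mem_univ j, hne⟩) ?_
  rw [map_sub, heval_a, heval_a]
  exact sub_eq_zero.mpr hij

section Specialization

variable {K R A ι : Type*} [CommRing K] [CommRing R] [Algebra K R] [CommRing A] [Algebra K A]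
  (b : Module.Basis ι K A) (f : R →ₐ[K] K)

theorem Module.Basis.map_baseChange_repr (t : R ⊗[K] A) (i : ι) :
    f ((b.baseChange R).repr t i) =
      b.repr (Algebra.TensorProduct.lid K A (Algebra.TensorProduct.map f (AlgHom.id K A) t)) i := by
  induction t using TensorProduct.induction_on with
  | zero => simp
  | tmul r x => simp [mul_comm]
  | add s t hs ht => simp [hs, ht]

theorem Module.Basis.map_baseChange_det [Fintype ι] [DecidableEq ι] (v : ι → R ⊗[K] A) :
    f ((b.baseChange R).det v) =
      b.det fun i =>
        Algebra.TensorProduct.lid K A (Algebra.TensorProduct.map f (AlgHom.id K A) (v i)) := by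
  rw [Module.Basis.det_apply, Module.Basis.det_apply, AlgHom.map_det]
  congr 1
  ext i j
  exact b.map_baseChange_repr f (v j) i

end Specialization

theorem exists_ne_zero_adjoin_sub_sum_smul_eq_top {K A κ : Type*} [Field K] [PerfectField K]
    [Infinite K] [CommRing A] [Algebra K A] [Module.Finite K A] [IsReduced A] [Fintype κ]
    {u : κ → A} {w : A} (hgen : Algebra.adjoin K (Set.range u ∪ {w}) = ⊤) :
    ∃ c : MvPolynomial κ K, c ≠ 0 ∧
      ∀ a : κ → K, eval a c ≠ 0 → Algebra.adjoin K {w - ∑ k, a k • u k} = ⊤ := by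
  let b := Module.finBasis K A
  let Z : MvPolynomial κ K ⊗[K] A := 1 ⊗ₜ w - ∑ k, X k ⊗ₜ u k
  let c := (b.baseChange (MvPolynomial κ K)).det fun j => Z ^ (j : ℕ)
  have hdet (a : κ → K) : eval a c = b.det fun j => (w - ∑ k, a k • u k) ^ (j : ℕ) := by
    rw [← aeval_eq_eval, b.map_baseChange_det]
    simp [Z, Algebra.TensorProduct.lid_tmul]
  refine ⟨c, fun h0 => ?_, fun a ha => ?_⟩
  · obtain ⟨σ, hσ⟩ := exists_injective_fin_finrank_algHom K (AlgebraicClosure K) A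
    obtain ⟨a, ha⟩ := exists_injective_algHom_apply_sub_sum_smul hgen hσ
    have hli := linearIndependent_pow_of_injective_algHom σ ha
    have hbasis := b.is_basis_iff_det.mp
      ⟨hli, hli.span_eq_top_of_card_eq_finrank' (Fintype.card_fin _)⟩
    rw [← hdet, h0, map_zero] at hbasis
    exact not_isUnit_zero hbasis
  · rw [hdet] at ha
    have hspan := (b.is_basis_iff_det.mpr (isUnit_iff_ne_zero.mpr ha)).2
    refine Algebra.toSubmodule_eq_top.mp (top_unique (hspan ▸ Submodule.span_le.mpr ?_))
    rintro _ ⟨j, rfl⟩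
    exact Subalgebra.pow_mem _ (Algebra.self_mem_adjoin_singleton K _) _

theorem finrank_quotient_comap_aeval {K S : Type*} [Field K] [CommRing S] [Algebra K S]
    {J : Ideal S} {x : S} (hx : Algebra.adjoin K {Ideal.Quotient.mk J x} = ⊤) :
    Module.finrank K (Polynomial K ⧸ J.comap (Polynomial.aeval x : Polynomial K →ₐ[K] S)) =
      Module.finrank K (S ⧸ J) := by
  let g : Polynomial K →ₐ[K] S ⧸ J := Polynomial.aeval (Ideal.Quotient.mk J x)
  have hg : Function.Surjective g := by
    rw [← AlgHom.range_eq_top, ← Algebra.adjoin_singleton_eq_range_aeval, hx]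
  have hker : J.comap (Polynomial.aeval x : Polynomial K →ₐ[K] S) = RingHom.ker g := by
    ext p
    rw [Ideal.mem_comap, RingHom.mem_ker, ← Ideal.Quotient.eq_zero_iff_mem,
      ← Ideal.Quotient.mkₐ_eq_mk K, ← Polynomial.aeval_algHom_apply]
    rfl
  rw [hker]
  exact (Ideal.quotientKerAlgEquivOfSurjective hg).toLinearEquiv.finrank_eq

theorem Ideal.comap_aeval_map_algEquiv {K S : Type*} [CommRing K] [CommRing S] [Algebra K S]
    (e : S ≃ₐ[K] S) (I : Ideal S) (x : S) :
    (I.map e).comap (Polynomial.aeval x : Polynomial K →ₐ[K] S) =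
      I.comap (Polynomial.aeval (e.symm x) : Polynomial K →ₐ[K] S) := by
  ext p
  simp only [Ideal.mem_comap, Polynomial.aeval_algEquiv, AlgHom.comp_apply, Ideal.mem_map_of_equiv]
  exact ⟨fun ⟨y, hy, hey⟩ => by simpa [← hey] using hy,
    fun h => ⟨_, h, e.apply_symm_apply _⟩⟩

theorem adjoin_range_mk_X_castSucc_union_mk_X_last {R : Type*} [CommRing R] {n : ℕ}
    (I : Ideal (MvPolynomial (Fin (n + 1)) R)) :
    Algebra.adjoin R (Set.range (fun i : Fin n => Ideal.Quotient.mk I (X i.castSucc)) ∪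
      {Ideal.Quotient.mk I (X (Fin.last n))}) = ⊤ := by
  have hrange : Set.range (fun i : Fin n => Ideal.Quotient.mk I (X i.castSucc)) ∪
      {Ideal.Quotient.mk I (X (Fin.last n))} = Ideal.Quotient.mkₐ R I '' Set.range X := by
    ext y
    simp [Fin.exists_fin_succ', eq_comm, or_comm]
  rw [hrange, ← AlgHom.map_adjoin, adjoin_range_X, Algebra.map_top, AlgHom.range_eq_top]
  exact Ideal.Quotient.mkₐ_surjective R I

section Shear

variable {R : Type*} [CommSemiring R] {n : ℕ}

noncomputable def shear (a : Fin n → R) :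
    MvPolynomial (Fin (n + 1)) R →ₐ[R] MvPolynomial (Fin (n + 1)) R :=
  aeval (Fin.lastCases (X (Fin.last n) + ∑ i, C (a i) * X i.castSucc) (fun i => X i.castSucc))

@[simp]
theorem shear_X_castSucc (a : Fin n → R) (i : Fin n) : shear a (X i.castSucc) = X i.castSucc := by
  simp [shear]

@[simp]
theorem shear_X_last (a : Fin n → R) :
    shear a (X (Fin.last n)) = X (Fin.last n) + ∑ i, C (a i) * X i.castSucc := by
  simp [shear]

theorem eq_shear {a : Fin n → R}
    {φ : MvPolynomial (Fin (n + 1)) R →ₐ[R] MvPolynomial (Fin (n + 1)) R}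
    (hφ : ∀ i : Fin n, φ (X i.castSucc) = X i.castSucc)
    (hφ_last : φ (X (Fin.last n)) = X (Fin.last n) + ∑ i, C (a i) * X i.castSucc) :
    φ = shear a :=
  algHom_ext fun k => Fin.lastCases (by simp [hφ_last]) (by simp [hφ]) k

theorem shear_comp_shear (a b : Fin n → R) : (shear a).comp (shear b) = shear (a + b) :=
  algHom_ext fun k => Fin.lastCases
    (by simp [add_assoc, Finset.sum_add_distrib, add_mul]) (by simp) k

theorem shear_zero : shear (0 : Fin n → R) = AlgHom.id R _ :=
  algHom_ext fun k => Fin.lastCases (by simp) (by simp) k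

variable {R : Type*} [CommRing R] {n : ℕ}

noncomputable def shearEquiv (a : Fin n → R) :
    MvPolynomial (Fin (n + 1)) R ≃ₐ[R] MvPolynomial (Fin (n + 1)) R :=
  AlgEquiv.ofAlgHom (shear a) (shear (-a))
    (by rw [shear_comp_shear, add_neg_cancel, shear_zero])
    (by rw [shear_comp_shear, neg_add_cancel, shear_zero])

theorem shearEquiv_symm_apply (a : Fin n → R) (p : MvPolynomial (Fin (n + 1)) R) :
    (shearEquiv a).symm p = shear (-a) p :=
  rfl

end Shear

/-- **Proposition (generic coordinate change).** Let `I ⊆ ℚ[x₁,…,xₙ]` be a zero-dimensional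
radical ideal. There is a non-empty Zariski-open subset `U ⊆ ℚ^{n-1}` (complement of the zero
set of a nonzero polynomial `c` in `n-1` variables) such that for all `a ∈ U` the coordinate
change `φ_a` (with `φ_a(xᵢ) = xᵢ` for `i < n` and `φ_a(xₙ) = xₙ + Σ aᵢxᵢ`) satisfies
`dim_ℚ ℚ[X]/φ_a(I) = dim_ℚ ℚ[xₙ]/(φ_a(I) ∩ ℚ[xₙ])`. -/
theorem statement2 (n : ℕ) (I : Ideal (MvPolynomial (Fin (n + 1)) ℚ))
    (hrad : I.IsRadical)
    (hfin : Module.Finite ℚ (MvPolynomial (Fin (n + 1)) ℚ ⧸ I)) :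
    ∃ c : MvPolynomial (Fin n) ℚ, c ≠ 0 ∧
      ∀ a : Fin n → ℚ, eval a c ≠ 0 →
        ∀ φ : MvPolynomial (Fin (n + 1)) ℚ →ₐ[ℚ] MvPolynomial (Fin (n + 1)) ℚ,
          (∀ i : Fin n, φ (X i.castSucc) = X i.castSucc) →
          φ (X (Fin.last n)) = X (Fin.last n) + ∑ i : Fin n, C (a i) * X i.castSucc →
          Module.finrank ℚ (MvPolynomial (Fin (n + 1)) ℚ ⧸ Ideal.map φ I) =
            Module.finrank ℚ (Polynomial ℚ ⧸ Ideal.comap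
              (Polynomial.aeval (X (Fin.last n)) :
                Polynomial ℚ →ₐ[ℚ] MvPolynomial (Fin (n + 1)) ℚ)
              (Ideal.map φ I)) := by
  have : IsReduced (MvPolynomial (Fin (n + 1)) ℚ ⧸ I) :=
    (Ideal.isRadical_iff_quotient_reduced I).mp hrad
  obtain ⟨c, hc0, hc⟩ :=
    exists_ne_zero_adjoin_sub_sum_smul_eq_top (adjoin_range_mk_X_castSucc_union_mk_X_last I)
  refine ⟨c, hc0, fun a ha φ hφ hφ_last => ?_⟩
  obtain rfl := eq_shear hφ hφ_last
  rw [show I.map (shear a) = I.map (shearEquiv a) from rfl, Ideal.comap_aeval_map_algEquiv,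
    finrank_quotient_comap_aeval]
  · exact (Ideal.quotientEquivAlg I _ (shearEquiv a) rfl).toLinearEquiv.finrank_eq.symm
  · have hz : Ideal.Quotient.mk I ((shearEquiv a).symm (X (Fin.last n))) =
        Ideal.Quotient.mk I (X (Fin.last n)) -
          ∑ k, a k • Ideal.Quotient.mk I (X k.castSucc) := by
      rw [shearEquiv_symm_apply, shear_X_last, map_add, map_sum, sub_eq_add_neg,
        ← Finset.sum_neg_distrib]
      congr! with k
      rw [← smul_eq_C_mul, ← Ideal.Quotient.mkₐ_eq_mk ℚ, map_smul, Pi.neg_apply, neg_smul]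
    rw [hz]
    exact hc a ha
end

section
/- Let I ⊆ ℚ[X] = ℚ[x₁,…,x_n] be an ideal, let F ∈ ℚ[T] (T a single variable) be squarefree, and let r = x_n + Σ_{i=1}^{n-1} aᵢxᵢ with a₁,…,a_{n-1} ∈ ℤ. Assume deg(F) = dim_ℚ(ℚ[X]/I) (in particular this dimension is finite), F(r) ∈ I, and no proper factor of F(r) is in I. Then I is a radical ideal. -/
open MvPolynomial

/-- **Corollary (first part).** Let `I ⊆ ℚ[x₁,…,xₙ]` be an ideal, `F ∈ ℚ[T]` squarefree,
and `r = xₙ + Σ aᵢxᵢ` with integer coefficients `aᵢ`. If `deg F = dim_ℚ ℚ[X]/I` (finite),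
`F(r) ∈ I` and no proper factor of `F(r)` lies in `I`, then `I` is a radical ideal. -/
theorem statement3 (n : ℕ) (I : Ideal (MvPolynomial (Fin (n + 1)) ℚ))
    (F : Polynomial ℚ) (hsf : Squarefree F) (a : Fin n → ℤ)
    (r : MvPolynomial (Fin (n + 1)) ℚ)
    (hr : r = X (Fin.last n) + ∑ i : Fin n, C ((a i : ℚ)) * X i.castSucc)
    (hfin : Module.Finite ℚ (MvPolynomial (Fin (n + 1)) ℚ ⧸ I))
    (hdeg : F.natDegree = Module.finrank ℚ (MvPolynomial (Fin (n + 1)) ℚ ⧸ I))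
    (hFr : Polynomial.aeval r F ∈ I)
    (hproper : ∀ H : Polynomial ℚ, H ∣ F → 0 < H.natDegree → H.natDegree < F.natDegree →
      Polynomial.aeval r H ∉ I) :
    I.IsRadical := by
  classical
  set A := MvPolynomial (Fin (n + 1)) ℚ ⧸ I with hA
  let q : MvPolynomial (Fin (n + 1)) ℚ →ₐ[ℚ] A := Ideal.Quotient.mkₐ ℚ I
  let φ : Polynomial ℚ →ₐ[ℚ] A := Polynomial.aeval (q r)
  have key : ∀ H : Polynomial ℚ, φ H = q (Polynomial.aeval r H) := fun H =>
    Polynomial.aeval_algHom_apply q r H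
  have hmem : ∀ H : Polynomial ℚ, φ H = 0 ↔ Polynomial.aeval r H ∈ I := by
    intro H
    rw [key H]
    exact Ideal.Quotient.eq_zero_iff_mem
  have hF0 : F ≠ 0 := hsf.ne_zero
  have hFk : F ∈ RingHom.ker φ := by
    rw [RingHom.mem_ker, hmem]; exact hFr
  set K : Ideal (Polynomial ℚ) := RingHom.ker φ with hK
  obtain ⟨m, hm⟩ : K.IsPrincipal := inferInstance
  have hmK : m ∈ K := hm ▸ Ideal.subset_span rfl
  have hm' : K = Ideal.span {m} := hm
  have hmdvd : m ∣ F := by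
    have := hFk
    rw [hm', Ideal.mem_span_singleton] at this
    exact this
  have hm0 : m ≠ 0 := by
    rintro rfl
    rw [zero_dvd_iff] at hmdvd
    exact hF0 hmdvd
  have hmle : m.natDegree ≤ F.natDegree := Polynomial.natDegree_le_of_dvd hmdvd hF0
  -- degrees are equal
  have hmdeg : m.natDegree = F.natDegree := by
    by_contra hne
    have hlt : m.natDegree < F.natDegree := lt_of_le_of_ne hmle hne
    rcases Nat.eq_zero_or_pos m.natDegree with h0 | hpos
    · -- m is a unit, so 1 ∈ K, A is trivial, finrank A = 0, contradiction
      have hmu : IsUnit m := Polynomial.isUnit_iff_degree_eq_zero.mpr (by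
        rw [Polynomial.degree_eq_natDegree hm0, h0]; rfl)
      have hKtop : K = ⊤ := by
        rw [hm', Ideal.span_singleton_eq_top]; exact hmu
      have h1 : (1 : A) = 0 := by
        have h2 : (1 : Polynomial ℚ) ∈ K := by rw [hKtop]; exact Submodule.mem_top
        have h3 : φ 1 = 0 := (RingHom.mem_ker).mp h2
        rwa [map_one] at h3
      have : Subsingleton A := subsingleton_of_zero_eq_one h1.symm
      have hfr : Module.finrank ℚ (MvPolynomial (Fin (n + 1)) ℚ ⧸ I) = 0 :=
        Module.finrank_zero_of_subsingleton
      omega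
    · exact hproper m hmdvd hpos hlt ((hmem m).mp ((RingHom.mem_ker).mp hmK))
  -- from dvd + equal degrees: associated
  have hassoc : Associated m F := by
    obtain ⟨c, hc⟩ := hmdvd
    have hc0 : c ≠ 0 := by rintro rfl; rw [mul_zero] at hc; exact hF0 hc
    have : F.natDegree = m.natDegree + c.natDegree := hc ▸ Polynomial.natDegree_mul hm0 hc0
    have hcdeg : c.natDegree = 0 := by omega
    have hcu : IsUnit c := Polynomial.isUnit_iff_degree_eq_zero.mpr (by
      rw [Polynomial.degree_eq_natDegree hc0, hcdeg]; rfl)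
    exact ⟨hcu.unit, by rw [IsUnit.unit_spec, ← hc]⟩
  have hKF : K = Ideal.span {F} := by
    rw [hm', Ideal.span_singleton_eq_span_singleton.mpr hassoc]
  -- Build the injective alg hom from ℚ[T]/(F) to A
  let e : (Polynomial ℚ ⧸ Ideal.span {F}) ≃ₐ[ℚ] (Polynomial ℚ ⧸ K) :=
    Ideal.quotientEquivAlgOfEq ℚ hKF.symm
  let χ : (Polynomial ℚ ⧸ Ideal.span {F}) →ₐ[ℚ] A := (Ideal.kerLiftAlg φ).comp e.toAlgHom
  have hχinj : Function.Injective χ :=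
    (Ideal.kerLiftAlg_injective φ).comp e.injective
  -- dimensions
  have hfd1 : FiniteDimensional ℚ (Polynomial ℚ ⧸ Ideal.span {F}) :=
    Module.Finite.of_basis (AdjoinRoot.powerBasis hF0).basis
  have hfdA : FiniteDimensional ℚ A := hfin
  have hdim : Module.finrank ℚ (Polynomial ℚ ⧸ Ideal.span {F}) = Module.finrank ℚ A := by
    have h1 : Module.finrank ℚ (Polynomial ℚ ⧸ Ideal.span {F}) = F.natDegree :=
      (AdjoinRoot.powerBasis hF0).finrank
    rw [h1]; exact hdeg
  have hχsurj : Function.Surjective χ := by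
    have := (χ.toLinearMap.linearEquivOfInjective hχinj hdim).surjective
    exact this
  -- A is reduced
  have hred : IsReduced (Polynomial ℚ ⧸ Ideal.span {F}) :=
    (Ideal.isRadical_iff_quotient_reduced _).mp
      (isRadical_iff_span_singleton.mp ((isRadical_iff_squarefree_of_ne_zero hF0).mpr hsf))
  have hredA : IsReduced A := by
    have e2 : (Polynomial ℚ ⧸ Ideal.span {F}) ≃ₐ[ℚ] A :=
      AlgEquiv.ofBijective χ ⟨hχinj, hχsurj⟩
    exact isReduced_of_injective e2.symm.toRingHom e2.symm.injective
  exact (Ideal.isRadical_iff_quotient_reduced I).mpr hredA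
end

section
/- Let I ⊆ ℚ[X] = ℚ[x₁,…,x_n] be an ideal, let F ∈ ℚ[T] be squarefree, and let r = x_n + Σ_{i=1}^{n-1} aᵢxᵢ with a₁,…,a_{n-1} ∈ ℤ. Assume deg(F) = dim_ℚ(ℚ[X]/I) (finite), F(r) ∈ I, and no proper factor of F(r) is in I. Let F = F₁⋯F_s be the factorization of F into irreducible factors over ℚ. Then I = ⋂_{i=1}^{s} ⟨I, Fᵢ(r)⟩, and the ideal ⟨I, Fᵢ(r)⟩ is prime for each i = 1,…,s. -/
/-!
Let `A = ℚ[X]/I` and `t ∈ A` the class of `r`. The minimal polynomial of `t` divides `F`, and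
the hypothesis on proper factors forces it to have the full degree `deg F = dim_ℚ A`; so
`ℚ[t] = A`, i.e. evaluation at `t` gives `ℚ[T]/(F) ≅ A`. Since `F` is squarefree its irreducible
factors are pairwise coprime, so by the Chinese remainder theorem `(F) = ⋂ (Fᵢ)`, and each `(Fᵢ)`
is prime. Transporting these ideals to `A` and pulling them back to `ℚ[X]` gives `⟨I, Fᵢ(r)⟩`.
-/

open scoped Function

section Minpoly

open Polynomial

variable {K A : Type*} [Field K] [CommRing A] [Algebra K A] [FiniteDimensional K A]

theorem minpoly_associated_of_natDegree_eq_finrank {t : A} {F : K[X]} (hF0 : F ≠ 0)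
    (hFt : aeval t F = 0) (hdeg : F.natDegree = Module.finrank K A)
    (hproper : ∀ H : K[X], H ∣ F → 0 < H.natDegree → H.natDegree < F.natDegree →
      aeval t H ≠ 0) :
    Associated (minpoly K t) F := by
  have hdvd : minpoly K t ∣ F := minpoly.dvd K t hFt
  refine associated_of_dvd_of_natDegree_le hdvd hF0 (not_lt.mp fun hlt => ?_)
  cases subsingleton_or_nontrivial A with
  | inl _ => rw [Module.finrank_zero_of_subsingleton] at hdeg; omega
  | inr _ =>
    exact hproper _ hdvd (minpoly.natDegree_pos (.of_finite K t)) hlt (minpoly.aeval K t)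

theorem aeval_surjective_of_natDegree_minpoly_eq_finrank {t : A}
    (h : (minpoly K t).natDegree = Module.finrank K A) :
    Function.Surjective (aeval t : K[X] →ₐ[K] A) := by
  rw [← AlgHom.range_eq_top, ← Algebra.adjoin_singleton_eq_range_aeval,
    ← Algebra.toSubmodule_eq_top]
  apply Submodule.eq_top_of_finrank_eq
  rw [Subalgebra.finrank_toSubmodule, (Algebra.adjoin.powerBasis (.of_finite K t)).finrank,
    Algebra.adjoin.powerBasis_dim, h]

end Minpoly

theorem pairwise_isCoprime_of_squarefree_prod {R ι : Type*} [CommRing R] [IsBezout R]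
    [Fintype ι] {f : ι → R} (h : Squarefree (∏ i, f i)) : Pairwise (IsCoprime on f) := by
  classical
  intro i j hij
  have hdvd : f i * f j ∣ ∏ k, f k := by
    rw [← Finset.prod_pair hij]
    exact Finset.prod_dvd_prod_of_subset _ _ _ (Finset.subset_univ _)
  exact (IsRelPrime.of_squarefree_mul (h.squarefree_of_dvd hdvd)).isCoprime

section SurjectiveRingHom

variable {R S F : Type*} [CommRing R] [CommRing S] [FunLike F R S] [RingHomClass F R S] {f : F}
  (hf : Function.Surjective f)
include hf

theorem comap_span_singleton_of_surjective (x : R) :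
    (Ideal.span {f x}).comap f = Ideal.span {x} ⊔ RingHom.ker f := by
  rw [← Set.image_singleton, ← Ideal.map_span, Ideal.comap_map_of_surjective' f hf]

theorem isPrime_span_singleton_map_of_surjective {p : R} (hp : (Ideal.span {p}).IsPrime)
    (hker : RingHom.ker f ≤ Ideal.span {p}) : (Ideal.span {f p}).IsPrime := by
  simpa only [Ideal.map_span, Set.image_singleton] using Ideal.map_isPrime_of_surjective hf hker

theorem iInf_span_singleton_map_eq_bot_of_surjective {ι : Type*} [Fintype ι] {g : ι → R}
    (hg : Pairwise (IsCoprime on g)) (hker : RingHom.ker f = Ideal.span {∏ i, g i}) :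
    ⨅ i, Ideal.span {f (g i)} = ⊥ := by
  classical
  apply Ideal.comap_injective_of_surjective f hf
  have hle : ∀ i, RingHom.ker f ≤ Ideal.span {g i} := fun i => by
    rw [hker, Ideal.span_singleton_le_span_singleton]
    exact Finset.dvd_prod_of_mem g (Finset.mem_univ i)
  have hcomap : ∀ i, (Ideal.span {f (g i)}).comap f = Ideal.span {g i} := fun i => by
    rw [comap_span_singleton_of_surjective hf, sup_eq_left.mpr (hle i)]
  rw [Ideal.comap_iInf, ← RingHom.ker_eq_comap_bot, hker]
  simp_rw [hcomap]
  exact Ideal.iInf_span_singleton fun i j hij => hg hij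

end SurjectiveRingHom

theorem Ideal.sup_span_singleton_eq_comap_mk {R : Type*} [CommRing R] (I : Ideal R) (x : R) :
    I ⊔ Ideal.span {x} = (Ideal.span {Ideal.Quotient.mk I x}).comap (Ideal.Quotient.mk I) := by
  rw [comap_span_singleton_of_surjective Ideal.Quotient.mk_surjective, Ideal.mk_ker, sup_comm]

open MvPolynomial

theorem statement4_general (n s : ℕ) (I : Ideal (MvPolynomial (Fin (n + 1)) ℚ))
    (F : Polynomial ℚ) (hsf : Squarefree F)
    (r : MvPolynomial (Fin (n + 1)) ℚ)
    (hfin : Module.Finite ℚ (MvPolynomial (Fin (n + 1)) ℚ ⧸ I))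
    (hdeg : F.natDegree = Module.finrank ℚ (MvPolynomial (Fin (n + 1)) ℚ ⧸ I))
    (hFr : Polynomial.aeval r F ∈ I)
    (hproper : ∀ H : Polynomial ℚ, H ∣ F → 0 < H.natDegree → H.natDegree < F.natDegree →
      Polynomial.aeval r H ∉ I)
    (Fi : Fin s → Polynomial ℚ) (hirr : ∀ i, Irreducible (Fi i))
    (hfac : F = ∏ i, Fi i) :
    I = (⨅ i : Fin s, (I ⊔ Ideal.span {Polynomial.aeval r (Fi i)})) ∧
      ∀ i : Fin s, (I ⊔ Ideal.span {Polynomial.aeval r (Fi i)}).IsPrime := by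
  set t := Ideal.Quotient.mk I r
  set φ : Polynomial ℚ →ₐ[ℚ] _ := Polynomial.aeval t
  have hφ : ∀ G, φ G = Ideal.Quotient.mk I (Polynomial.aeval r G) :=
    Polynomial.aeval_algHom_apply (Ideal.Quotient.mkₐ ℚ I) r
  have hφ_eq_zero : ∀ G, φ G = 0 ↔ Polynomial.aeval r G ∈ I := fun G => by
    rw [hφ, Ideal.Quotient.eq_zero_iff_mem]
  have hassoc : Associated (minpoly ℚ t) F :=
    minpoly_associated_of_natDegree_eq_finrank hsf.ne_zero ((hφ_eq_zero F).mpr hFr) hdeg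
      fun H hH hpos hlt => mt (hφ_eq_zero H).mp (hproper H hH hpos hlt)
  have hsurj : Function.Surjective φ := aeval_surjective_of_natDegree_minpoly_eq_finrank <|
    (Polynomial.natDegree_eq_of_degree_eq (Polynomial.degree_eq_degree_of_associated hassoc)).trans
      hdeg
  have hker : RingHom.ker φ = Ideal.span {∏ i, Fi i} := by
    rw [minpoly.ker_aeval_eq_span_minpoly, ← hfac]
    exact Ideal.span_singleton_eq_span_singleton.mpr hassoc
  simp_rw [Ideal.sup_span_singleton_eq_comap_mk, ← hφ]
  refine ⟨?_, fun i => ?_⟩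
  · rw [← Ideal.comap_iInf, iInf_span_singleton_map_eq_bot_of_surjective hsurj
      (pairwise_isCoprime_of_squarefree_prod (hfac ▸ hsf)) hker, ← RingHom.ker_eq_comap_bot,
      Ideal.mk_ker]
  · have hker_le : RingHom.ker φ ≤ Ideal.span {Fi i} := by
      rw [hker, Ideal.span_singleton_le_span_singleton]
      exact Finset.dvd_prod_of_mem Fi (Finset.mem_univ i)
    have hprime := isPrime_span_singleton_map_of_surjective hsurj
      ((Ideal.span_singleton_prime (hirr i).ne_zero).mpr (hirr i).prime) hker_le
    exact hprime.comap _

/-- **Corollary (second part).** Let `I ⊆ ℚ[x₁,…,xₙ]` be an ideal, `F ∈ ℚ[T]` squarefree,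
`r = xₙ + Σ aᵢxᵢ` with integer `aᵢ`, `deg F = dim_ℚ ℚ[X]/I` (finite), `F(r) ∈ I` and no
proper factor of `F(r)` in `I`. If `F = F₁ ⋯ F_s` with each `Fᵢ` irreducible, then
`I = ⋂ᵢ ⟨I, Fᵢ(r)⟩` and each `⟨I, Fᵢ(r)⟩` is prime. -/
theorem statement4 (n s : ℕ) (I : Ideal (MvPolynomial (Fin (n + 1)) ℚ))
    (F : Polynomial ℚ) (hsf : Squarefree F) (a : Fin n → ℤ)
    (r : MvPolynomial (Fin (n + 1)) ℚ)
    (hr : r = X (Fin.last n) + ∑ i : Fin n, C ((a i : ℚ)) * X i.castSucc)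
    (hfin : Module.Finite ℚ (MvPolynomial (Fin (n + 1)) ℚ ⧸ I))
    (hdeg : F.natDegree = Module.finrank ℚ (MvPolynomial (Fin (n + 1)) ℚ ⧸ I))
    (hFr : Polynomial.aeval r F ∈ I)
    (hproper : ∀ H : Polynomial ℚ, H ∣ F → 0 < H.natDegree → H.natDegree < F.natDegree →
      Polynomial.aeval r H ∉ I)
    (Fi : Fin s → Polynomial ℚ) (hirr : ∀ i, Irreducible (Fi i))
    (hfac : F = ∏ i, Fi i) :
    I = (⨅ i : Fin s, (I ⊔ Ideal.span {Polynomial.aeval r (Fi i)})) ∧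
      ∀ i : Fin s, (I ⊔ Ideal.span {Polynomial.aeval r (Fi i)}).IsPrime :=
  statement4_general n s I F hsf r hfin hdeg hFr hproper Fi hirr hfac
end

section
/- Let I ⊆ ℚ[X] = ℚ[x₁,…,x_n] be a zero-dimensional ideal, and for i = 1,…,n let fᵢ ∈ ℚ[xᵢ] be a generator of the elimination ideal, i.e. ⟨fᵢ⟩ = I ∩ ℚ[xᵢ]. Let gᵢ be the squarefree part of fᵢ. Then √I = I + ⟨g₁,…,g_n⟩. -/
/-!
An algebra generated by roots of separable polynomials has no Kähler differentials: if
`p(a) = 0` with `p` separable, then `p'(a)` is a unit and `0 = d(p(a)) = p'(a) da`. It is therefore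
formally unramified, and a formally unramified algebra of finite type over a field is reduced.
Over `ℚ` squarefree means separable, so `ℚ[X] ⧸ (I + ⟨g₁(x₁),…,gₙ(xₙ)⟩)` is reduced, i.e.
`I + ⟨g₁,…,gₙ⟩` is radical; it lies in `√I` because `fᵢ ∣ gᵢᵏ`.
-/

open MvPolynomial
open scoped Polynomial

namespace KaehlerDifferential

variable {R A : Type*} [CommRing R] [CommRing A] [Algebra R A]

theorem D_eq_zero_of_separable {p : R[X]} (hp : p.Separable) {a : A}
    (ha : Polynomial.aeval a p = 0) : D R A a = 0 := by
  obtain ⟨u, v, huv⟩ := hp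
  have hunit : IsUnit (Polynomial.aeval a (Polynomial.derivative p)) :=
    .of_mul_eq_one (Polynomial.aeval a v) <| by
      simpa [ha, mul_comm] using congrArg (Polynomial.aeval a) huv
  have hsmul : Polynomial.aeval a (Polynomial.derivative p) • D R A a = 0 := by
    rw [← Derivation.map_aeval, ha, map_zero]
  exact hunit.smul_eq_zero.mp hsmul

theorem subsingleton_of_adjoin_eq_top {s : Set A} (hs : Algebra.adjoin R s = ⊤)
    (hD : ∀ a ∈ s, D R A a = 0) : Subsingleton Ω[A⁄R] := by
  have hD0 : D R A = 0 := Derivation.ext_of_adjoin_eq_top s hs hD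
  suffices (⊤ : Submodule A Ω[A⁄R]) ≤ ⊥ from
    (subsingleton_iff_forall_eq 0).mpr fun ω ↦ this trivial
  rw [← span_range_derivation, Submodule.span_le]
  rintro _ ⟨a, rfl⟩
  simp [hD0]

end KaehlerDifferential

theorem Algebra.FormallyUnramified.of_adjoin_eq_top_of_separable {R A : Type*} [CommRing R]
    [CommRing A] [Algebra R A] {s : Set A} (hs : Algebra.adjoin R s = ⊤)
    (hsep : ∀ a ∈ s, ∃ p : R[X], p.Separable ∧ Polynomial.aeval a p = 0) :
    Algebra.FormallyUnramified R A :=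
  ⟨KaehlerDifferential.subsingleton_of_adjoin_eq_top hs fun a ha ↦
    let ⟨_, hp, hpa⟩ := hsep a ha
    KaehlerDifferential.D_eq_zero_of_separable hp hpa⟩

theorem MvPolynomial.isRadical_of_separable_aeval_X_mem {K σ : Type*} [Field K] [Finite σ]
    {J : Ideal (MvPolynomial σ K)} {p : σ → K[X]} (hsep : ∀ i, (p i).Separable)
    (hmem : ∀ i, Polynomial.aeval (X i) (p i) ∈ J) : J.IsRadical := by
  set π := Ideal.Quotient.mkₐ K J
  have hgen : Algebra.adjoin K (Set.range fun i ↦ π (X i)) = ⊤ := by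
    rw [Set.range_comp' π X, ← AlgHom.map_adjoin, adjoin_range_X, Algebra.map_top,
      AlgHom.range_eq_top]
    exact Ideal.Quotient.mkₐ_surjective K J
  have hroot : ∀ i, Polynomial.aeval (π (X i)) (p i) = 0 := fun i ↦ by
    rw [Polynomial.aeval_algHom_apply, Ideal.Quotient.mkₐ_eq_mk, Ideal.Quotient.eq_zero_iff_mem]
    exact hmem i
  have : Algebra.FormallyUnramified K (MvPolynomial σ K ⧸ J) :=
    .of_adjoin_eq_top_of_separable hgen (by rintro _ ⟨i, rfl⟩; exact ⟨p i, hsep i, hroot i⟩)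
  exact (Ideal.isRadical_iff_quotient_reduced J).mpr
    (Algebra.FormallyUnramified.isReduced_of_field K _)

theorem statement5_general (n : ℕ) (I : Ideal (MvPolynomial (Fin n) ℚ))
    (f g : Fin n → Polynomial ℚ)
    (hf : ∀ i, Ideal.comap (Polynomial.aeval (X i : MvPolynomial (Fin n) ℚ)) I
      = Ideal.span {f i})
    (hg_sqfree : ∀ i, Squarefree (g i))
    (hg_rad : ∀ i, ∃ k : ℕ, f i ∣ g i ^ k) :
    I.radical = I ⊔ Ideal.span
      (Set.range fun i : Fin n => Polynomial.aeval (X i : MvPolynomial (Fin n) ℚ) (g i)) := by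
  set J := I ⊔ Ideal.span
    (Set.range fun i : Fin n => Polynomial.aeval (X i : MvPolynomial (Fin n) ℚ) (g i))
  have hJ_radical : J.IsRadical :=
    isRadical_of_separable_aeval_X_mem
      (fun i ↦ PerfectField.separable_iff_squarefree.mpr (hg_sqfree i))
      fun i ↦ Ideal.mem_sup_right (Ideal.subset_span ⟨i, rfl⟩)
  have hJ_le : J ≤ I.radical := by
    refine sup_le Ideal.le_radical (Ideal.span_le.mpr ?_)
    rintro _ ⟨i, rfl⟩
    obtain ⟨k, c, hc⟩ := hg_rad i
    have hfI : Polynomial.aeval (X i) (f i) ∈ I :=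
      (hf i).ge (Ideal.mem_span_singleton_self (f i))
    exact ⟨k, by rw [← map_pow, hc, map_mul]; exact I.mul_mem_right _ hfI⟩
  exact le_antisymm (hJ_radical.radical ▸ Ideal.radical_mono le_sup_left) hJ_le

/-- **Proposition (Krick–Logar).** Let `I ⊆ ℚ[x₁,…,xₙ]` be a zero-dimensional ideal and
`⟨fᵢ⟩ = I ∩ ℚ[xᵢ]` for `i = 1,…,n`. If `gᵢ` is the squarefree part of `fᵢ` (characterized
up to a constant by: `gᵢ` squarefree, `gᵢ ∣ fᵢ` and `fᵢ ∣ gᵢᵏ` for some `k`), then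
`√I = I + ⟨g₁,…,gₙ⟩`. -/
theorem statement5 (n : ℕ) (I : Ideal (MvPolynomial (Fin n) ℚ))
    (hfin : Module.Finite ℚ (MvPolynomial (Fin n) ℚ ⧸ I))
    (f g : Fin n → Polynomial ℚ)
    (hf : ∀ i, Ideal.comap (Polynomial.aeval (X i : MvPolynomial (Fin n) ℚ)) I
      = Ideal.span {f i})
    (hg_sqfree : ∀ i, Squarefree (g i))
    (hg_dvd : ∀ i, g i ∣ f i)
    (hg_rad : ∀ i, ∃ k : ℕ, f i ∣ g i ^ k) :
    I.radical = I ⊔ Ideal.span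
      (Set.range fun i : Fin n => Polynomial.aeval (X i : MvPolynomial (Fin n) ℚ) (g i)) :=
  statement5_general n I f g hf hg_sqfree hg_rad
end

section
/- Let I ⊆ ℚ[X] = ℚ[x₁,…,x_n] be a zero-dimensional ideal, let f_n ∈ ℚ[x_n] satisfy ⟨f_n⟩ = I ∩ ℚ[x_n], and let g_n be the squarefree part of f_n. If deg(f_n) = dim_ℚ(ℚ[X]/I), then √I = ⟨I, g_n⟩. -/
open MvPolynomial

/-!
The algebra map `ℚ[t] → ℚ[X]/I`, `t ↦ xₙ`, has kernel `⟨fₙ⟩`, so it embeds `ℚ[t]/⟨fₙ⟩`, of dimension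
`deg fₙ`, into `ℚ[X]/I`; equality of dimensions makes it onto. Hence every polynomial is congruent
modulo `I` to a polynomial in `xₙ`, and radical membership is decided in `ℚ[t]`, where
`√⟨fₙ⟩ = ⟨gₙ⟩`.
-/

theorem AlgHom.surjective_of_finrank_quotient_ker_eq {K A B : Type*} [Field K] [CommRing A]
    [Ring B] [Algebra K A] [Algebra K B] [Module.Finite K B] (φ : A →ₐ[K] B)
    (h : Module.finrank K (A ⧸ RingHom.ker φ) = Module.finrank K B) :
    Function.Surjective φ := by
  have hinj : Function.Injective (Ideal.kerLiftAlg φ) := Ideal.kerLiftAlg_injective φ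
  have : Module.Finite K (A ⧸ RingHom.ker φ) :=
    Module.Finite.of_injective (Ideal.kerLiftAlg φ).toLinearMap hinj
  have hsurj : Function.Surjective (Ideal.kerLiftAlg φ) :=
    (LinearMap.injective_iff_surjective_of_finrank_eq_finrank h
      (f := (Ideal.kerLiftAlg φ).toLinearMap)).mp hinj
  intro b
  obtain ⟨x, rfl⟩ := hsurj b
  obtain ⟨a, rfl⟩ := Ideal.Quotient.mk_surjective x
  exact ⟨a, rfl⟩

theorem Polynomial.aeval_surjective_of_ker_eq_span {K B : Type*} [Field K] [Ring B] [Algebra K B]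
    [Module.Finite K B] (x : B) {f : Polynomial K}
    (hker : RingHom.ker (Polynomial.aeval x) = Ideal.span {f})
    (hdeg : f.natDegree = Module.finrank K B) :
    Function.Surjective (Polynomial.aeval (R := K) x) :=
  (Polynomial.aeval x).surjective_of_finrank_quotient_ker_eq <| by
    rw [hker, finrank_quotient_span_eq_natDegree, hdeg]

theorem Ideal.radical_span_singleton_eq_of_squarefree {R : Type*} [CommRing R]
    [DecompositionMonoid R] {f g : R} (hg : Squarefree g) (hgf : g ∣ f) (hfg : ∃ k : ℕ, f ∣ g ^ k) :
    (Ideal.span {f}).radical = Ideal.span {g} := by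
  refine le_antisymm ?_ ?_
  · calc (Ideal.span {f}).radical ≤ (Ideal.span {g}).radical :=
          Ideal.radical_mono (Ideal.span_singleton_le_span_singleton.mpr hgf)
      _ = Ideal.span {g} := (isRadical_iff_span_singleton.mp hg.isRadical).radical
  · obtain ⟨k, hk⟩ := hfg
    rw [Ideal.span_singleton_le_iff_mem]
    exact ⟨k, Ideal.mem_span_singleton.mpr hk⟩

theorem Ideal.radical_eq_sup_map_radical_comap {S R F : Type*} [CommRing S] [CommRing R]
    [FunLike F S R] [RingHomClass F S R] (φ : F) (I : Ideal R)
    (hsurj : Function.Surjective (Ideal.Quotient.mk I ∘ φ)) :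
    I.radical = I ⊔ (I.comap φ).radical.map φ := by
  refine le_antisymm (fun a ha ↦ ?_) (sup_le I.le_radical ?_)
  · obtain ⟨p, hp⟩ := hsurj (Ideal.Quotient.mk I a)
    have hap : a - φ p ∈ I := Ideal.Quotient.eq.mp hp.symm
    have hp : p ∈ (I.comap φ).radical := by
      rw [← Ideal.comap_radical, Ideal.mem_comap]
      simpa using I.radical.sub_mem ha (I.le_radical hap)
    simpa using Submodule.add_mem_sup hap (Ideal.mem_map_of_mem φ hp)
  · rw [Ideal.map_le_iff_le_comap, Ideal.comap_radical]

/-- **Proposition.** Let `I ⊆ ℚ[x₁,…,xₙ]` be a zero-dimensional ideal, `⟨fₙ⟩ = I ∩ ℚ[xₙ]`,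
and let `gₙ` be the squarefree part of `fₙ` (characterized up to a constant by: `gₙ`
squarefree, `gₙ ∣ fₙ` and `fₙ ∣ gₙᵏ` for some `k`). If `deg fₙ = dim_ℚ ℚ[X]/I` then
`√I = ⟨I, gₙ⟩`. -/
theorem statement6 (n : ℕ) (I : Ideal (MvPolynomial (Fin (n + 1)) ℚ))
    (hfin : Module.Finite ℚ (MvPolynomial (Fin (n + 1)) ℚ ⧸ I))
    (fn gn : Polynomial ℚ)
    (hfn : Ideal.comap (Polynomial.aeval (X (Fin.last n) : MvPolynomial (Fin (n + 1)) ℚ)) I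
      = Ideal.span {fn})
    (hg_sqfree : Squarefree gn)
    (hg_dvd : gn ∣ fn)
    (hg_rad : ∃ k : ℕ, fn ∣ gn ^ k)
    (hdeg : fn.natDegree = Module.finrank ℚ (MvPolynomial (Fin (n + 1)) ℚ ⧸ I)) :
    I.radical = I ⊔ Ideal.span
      {Polynomial.aeval (X (Fin.last n) : MvPolynomial (Fin (n + 1)) ℚ) gn} := by
  set xₙ : MvPolynomial (Fin (n + 1)) ℚ := X (Fin.last n)
  have hker : RingHom.ker (Polynomial.aeval (Ideal.Quotient.mkₐ ℚ I xₙ)) = Ideal.span {fn} := by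
    rw [← hfn]
    ext p
    rw [RingHom.mem_ker, Polynomial.aeval_algHom_apply, Ideal.Quotient.mkₐ_eq_mk,
      Ideal.Quotient.eq_zero_iff_mem, Ideal.mem_comap]
  have hsurj : Function.Surjective (Ideal.Quotient.mk I ∘ Polynomial.aeval (R := ℚ) xₙ) := by
    have := Polynomial.aeval_surjective_of_ker_eq_span _ hker hdeg
    rwa [Polynomial.aeval_algHom, AlgHom.coe_comp] at this
  rw [Ideal.radical_eq_sup_map_radical_comap _ I hsurj, hfn,
    Ideal.radical_span_singleton_eq_of_squarefree hg_sqfree hg_dvd hg_rad, Ideal.map_span,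
    Set.image_singleton]
end

section
/- Let I ⊆ ℚ[X] = ℚ[x₁,…,x_n] be a zero-dimensional ideal and r = x_n + Σ_{i=1}^{n-1} aᵢxᵢ with a₁,…,a_{n-1} ∈ ℤ. Let F ∈ ℚ[T] be such that deg(F) = dim_ℚ(ℚ[X]/I), F(r) ∈ I, and no proper factor of F(r) is in I. Let H be the squarefree part of F. Then √I = ⟨I, H(r)⟩. -/
open MvPolynomial

set_option synthInstance.maxHeartbeats 1000000 in
/-- **Corollary.** Let `I ⊆ ℚ[x₁,…,xₙ]` be a zero-dimensional ideal, `r = xₙ + Σ aᵢxᵢ`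
with integer `aᵢ`, and `F ∈ ℚ[T]` with `deg F = dim_ℚ ℚ[X]/I`, `F(r) ∈ I` and no proper
factor of `F(r)` in `I`. If `H` is the squarefree part of `F` (characterized up to a
constant by: `H` squarefree, `H ∣ F` and `F ∣ Hᵏ` for some `k`), then `√I = ⟨I, H(r)⟩`. -/
theorem statement7 (n : ℕ) (I : Ideal (MvPolynomial (Fin (n + 1)) ℚ))
    (hfin : Module.Finite ℚ (MvPolynomial (Fin (n + 1)) ℚ ⧸ I))
    (a : Fin n → ℤ) (r : MvPolynomial (Fin (n + 1)) ℚ)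
    (hr : r = X (Fin.last n) + ∑ i : Fin n, C ((a i : ℚ)) * X i.castSucc)
    (F H : Polynomial ℚ)
    (hdeg : F.natDegree = Module.finrank ℚ (MvPolynomial (Fin (n + 1)) ℚ ⧸ I))
    (hFr : Polynomial.aeval r F ∈ I)
    (hproper : ∀ G : Polynomial ℚ, G ∣ F → 0 < G.natDegree → G.natDegree < F.natDegree →
      Polynomial.aeval r G ∉ I)
    (hH_sqfree : Squarefree H)
    (hH_dvd : H ∣ F)
    (hH_rad : ∃ k : ℕ, F ∣ H ^ k) :
    I.radical = I ⊔ Ideal.span {Polynomial.aeval r H} := by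
  classical
  by_cases htop : I = ⊤
  · subst htop; simp [Ideal.radical_eq_top]
  haveI : Nontrivial (MvPolynomial (Fin (n + 1)) ℚ ⧸ I) := Ideal.Quotient.nontrivial_iff.mpr htop
  set ρ : MvPolynomial (Fin (n + 1)) ℚ ⧸ I := Ideal.Quotient.mk I r with hρ
  have hInt : IsIntegral ℚ ρ := IsIntegral.of_finite ℚ ρ
  have haeval : ∀ g : Polynomial ℚ,
      Polynomial.aeval ρ g = Ideal.Quotient.mk I (Polynomial.aeval r g) := by
    intro g
    rw [show ρ = (Ideal.Quotient.mkₐ ℚ I) r from rfl, Polynomial.aeval_algHom_apply]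
    rfl
  have hFρ : Polynomial.aeval ρ F = 0 := by
    rw [haeval]; exact (Ideal.Quotient.eq_zero_iff_mem).mpr hFr
  have hmdvd : minpoly ℚ ρ ∣ F := minpoly.dvd ℚ ρ hFρ
  have hfinpos : 0 < Module.finrank ℚ (MvPolynomial (Fin (n + 1)) ℚ ⧸ I) :=
    Module.finrank_pos
  have hF0 : F ≠ 0 := by
    intro h; rw [h, Polynomial.natDegree_zero] at hdeg; omega
  have hmdeg_pos : 0 < (minpoly ℚ ρ).natDegree := minpoly.natDegree_pos hInt
  have hmρ : Polynomial.aeval r (minpoly ℚ ρ) ∈ I := by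
    rw [← Ideal.Quotient.eq_zero_iff_mem, ← haeval]; exact minpoly.aeval ℚ ρ
  have hmdeg : (minpoly ℚ ρ).natDegree = F.natDegree := by
    by_contra hne
    have hle := Polynomial.natDegree_le_of_dvd hmdvd hF0
    exact hproper _ hmdvd hmdeg_pos (lt_of_le_of_ne hle hne) hmρ
  -- kernel of aeval ρ is generated by F
  have hker : ∀ g : Polynomial ℚ, Polynomial.aeval ρ g = 0 → F ∣ g := by
    intro g hg
    have h1 : minpoly ℚ ρ ∣ g := minpoly.dvd ℚ ρ hg
    have h2 : Associated (minpoly ℚ ρ) F :=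
      Polynomial.associated_of_dvd_of_natDegree_le hmdvd hF0 hmdeg.ge
    exact dvd_trans h2.symm.dvd h1
  -- surjectivity of aeval ρ
  have hsurj : ∀ y : MvPolynomial (Fin (n + 1)) ℚ ⧸ I, ∃ g : Polynomial ℚ,
      Polynomial.aeval ρ g = y := by
    have hadj : Algebra.adjoin ℚ ({ρ} : Set _) = ⊤ := by
      have hfr : Module.finrank ℚ (Algebra.adjoin ℚ ({ρ} : Set _)) = (minpoly ℚ ρ).natDegree :=
        (Algebra.adjoin.powerBasis hInt).finrank
      apply Algebra.toSubmodule_eq_top.1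
      apply Submodule.eq_top_of_finrank_eq
      rw [(Algebra.adjoin ℚ ({ρ} : Set _)).finrank_toSubmodule, hfr, hmdeg, hdeg]
    intro y
    have : y ∈ Algebra.adjoin ℚ ({ρ} : Set _) := hadj ▸ Algebra.mem_top
    rw [Algebra.adjoin_singleton_eq_range_aeval] at this
    exact this
  apply le_antisymm
  · intro p hp
    obtain ⟨s, hps⟩ := Ideal.mem_radical_iff.1 hp
    have hs0 : s ≠ 0 := by
      rintro rfl
      exact htop ((Ideal.eq_top_iff_one I).2 (by simpa using hps))
    obtain ⟨g, hg⟩ := hsurj (Ideal.Quotient.mk I p)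
    have hgs : Polynomial.aeval ρ (g ^ s) = 0 := by
      rw [map_pow, hg, ← map_pow, Ideal.Quotient.eq_zero_iff_mem]
      exact hps
    have hFg : F ∣ g ^ s := hker _ hgs
    have hHg : H ∣ g := (hH_sqfree.dvd_pow_iff_dvd hs0).1 (dvd_trans hH_dvd hFg)
    obtain ⟨q, rfl⟩ := hHg
    have h1 : p - Polynomial.aeval r (H * q) ∈ I := by
      rw [← Ideal.Quotient.eq_zero_iff_mem, map_sub, ← haeval, hg, sub_self]
    have h2 : Polynomial.aeval r (H * q) ∈ Ideal.span {Polynomial.aeval r H} := by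
      rw [map_mul]
      exact Ideal.mul_mem_right _ _ (Ideal.subset_span rfl)
    have := Ideal.add_mem _ (Ideal.mem_sup_left h1) (Ideal.mem_sup_right h2)
    simpa using this
  · refine sup_le Ideal.le_radical (Ideal.span_le.2 ?_)
    rintro x rfl
    obtain ⟨k, Q, hQ⟩ := hH_rad
    refine Ideal.mem_radical_iff.2 ⟨k, ?_⟩
    rw [← map_pow, hQ, map_mul]
    exact Ideal.mul_mem_right _ _ hFr
end

section
/- Let K be a field, I ⊆ K[X] = K[x₁,…,x_n] an ideal, F ∈ K[T] monic and squarefree, and r = x_n + Σ_{i=1}^{n-1} aᵢxᵢ with a₁,…,a_{n-1} ∈ K. Assume deg(F) = dim_K(K[X]/I) (finite), F(r) ∈ I, and no proper factor of F(r) is in I. Let φ : K[T] → K[X] be the K-algebra homomorphism defined by φ(T) = r. Then φ⁻¹(I) = ⟨F⟩. -/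
open MvPolynomial

/-- **Lemma (1).** Let `K` be a field, `I ⊆ K[x₁,…,xₙ]` an ideal, `F ∈ K[T]` monic and
squarefree, `r = xₙ + Σ aᵢxᵢ` with `aᵢ ∈ K`, `deg F = dim_K K[X]/I` (finite), `F(r) ∈ I`
and no proper factor of `F(r)` in `I`. If `φ : K[T] → K[X]` is defined by `φ(T) = r`,
then `φ⁻¹(I) = ⟨F⟩`. -/
theorem statement8 (n : ℕ) (K : Type*) [Field K]
    (I : Ideal (MvPolynomial (Fin (n + 1)) K))
    (F : Polynomial K) (hmonic : F.Monic) (hsf : Squarefree F)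
    (a : Fin n → K) (r : MvPolynomial (Fin (n + 1)) K)
    (hr : r = X (Fin.last n) + ∑ i : Fin n, C (a i) * X i.castSucc)
    (hfin : Module.Finite K (MvPolynomial (Fin (n + 1)) K ⧸ I))
    (hdeg : F.natDegree = Module.finrank K (MvPolynomial (Fin (n + 1)) K ⧸ I))
    (hFr : Polynomial.aeval r F ∈ I)
    (hproper : ∀ H : Polynomial K, H ∣ F → 0 < H.natDegree → H.natDegree < F.natDegree →
      Polynomial.aeval r H ∉ I) :
    Ideal.comap (Polynomial.aeval r : Polynomial K →ₐ[K] MvPolynomial (Fin (n + 1)) K) I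
      = Ideal.span {F} := by

  set J := Ideal.comap (Polynomial.aeval r : Polynomial K →ₐ[K] MvPolynomial (Fin (n + 1)) K) I
    with hJdef
  obtain ⟨G, hG⟩ := (IsPrincipalIdealRing.principal J).principal
  rw [Ideal.submodule_span_eq] at hG
  have hFJ : F ∈ J := hFr
  have hGF : G ∣ F := by
    rw [← Ideal.mem_span_singleton, ← hG]; exact hFJ
  have hFne : F ≠ 0 := hmonic.ne_zero
  have hle : G.natDegree ≤ F.natDegree := Polynomial.natDegree_le_of_dvd hGF hFne
  have hGJ : G ∈ J := by rw [hG]; exact Ideal.mem_span_singleton_self G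
  by_cases h0 : G.natDegree = 0
  · -- G is a constant
    have hGne : G ≠ 0 := by
      rintro rfl
      exact hFne (zero_dvd_iff.mp hGF)
    have hGu : IsUnit G := Polynomial.isUnit_iff_degree_eq_zero.mpr
      (by rw [Polynomial.degree_eq_natDegree hGne, h0]; rfl)
    have hJtop : J = ⊤ := by
      rw [hG, Ideal.span_singleton_eq_top]; exact hGu
    have hItop : I = ⊤ := by
      rw [Ideal.eq_top_iff_one]
      have h1 : (1 : Polynomial K) ∈ J := hJtop ▸ Submodule.mem_top
      rw [hJdef, Ideal.mem_comap] at h1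
      simpa using h1
    have hsub : Subsingleton (MvPolynomial (Fin (n + 1)) K ⧸ I) := by
      rw [hItop]; infer_instance
    have hfr0 : Module.finrank K (MvPolynomial (Fin (n + 1)) K ⧸ I) = 0 :=
      Module.finrank_zero_of_subsingleton
    have hF1 : F = 1 := by
      have : F.natDegree = 0 := by rw [hdeg, hfr0]
      exact hmonic.natDegree_eq_zero.mp this
    rw [hJtop, hF1, Ideal.span_singleton_one]
  · rcases lt_or_eq_of_le hle with hlt | heq
    · exact absurd hGJ (hproper G hGF (Nat.pos_of_ne_zero h0) hlt)
    · obtain ⟨q, hq⟩ := hGF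
      have hGne : G ≠ 0 := by
        rintro rfl
        exact hFne (zero_dvd_iff.mp ⟨q, hq⟩)
      have hqne : q ≠ 0 := by
        rintro rfl
        simp at hq
        exact hFne hq
      have hqdeg : q.natDegree = 0 := by
        have h := Polynomial.natDegree_mul hGne hqne
        rw [← hq] at h
        omega
      have hqu : IsUnit q := Polynomial.isUnit_iff_degree_eq_zero.mpr
        (by rw [Polynomial.degree_eq_natDegree hqne, hqdeg]; rfl)
      have : Associated G F := ⟨hqu.unit, by rw [hqu.unit_spec]; exact hq.symm⟩
      rw [hG, Ideal.span_singleton_eq_span_singleton.mpr this]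
end

section
/- Let K be a field, I ⊆ K[X] = K[x₁,…,x_n] an ideal, F ∈ K[T] monic and squarefree, and r = x_n + Σ_{i=1}^{n-1} aᵢxᵢ with a₁,…,a_{n-1} ∈ K. Assume deg(F) = dim_K(K[X]/I) (finite), F(r) ∈ I, and no proper factor of F(r) is in I. Let ψ : K[X] → K[X] be the K-algebra automorphism defined by ψ(xᵢ) = xᵢ for i = 1,…,n−1 and ψ(x_n) = 2x_n − r. Then ψ(I) ∩ K[x_n] = ⟨F(x_n)⟩. -/
open MvPolynomial

/-- **Lemma (2).** Let `K` be a field, `I ⊆ K[x₁,…,xₙ]` an ideal, `F ∈ K[T]` monic and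
squarefree, `r = xₙ + Σ aᵢxᵢ` with `aᵢ ∈ K`, `deg F = dim_K K[X]/I` (finite), `F(r) ∈ I`
and no proper factor of `F(r)` in `I`. If `ψ : K[X] → K[X]` is the automorphism with
`ψ(xᵢ) = xᵢ` for `i < n` and `ψ(xₙ) = 2xₙ - r`, then `ψ(I) ∩ K[xₙ] = ⟨F(xₙ)⟩`. -/
theorem statement9 (n : ℕ) (K : Type*) [Field K]
    (I : Ideal (MvPolynomial (Fin (n + 1)) K))
    (F : Polynomial K) (hmonic : F.Monic) (hsf : Squarefree F)
    (a : Fin n → K) (r : MvPolynomial (Fin (n + 1)) K)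
    (hr : r = X (Fin.last n) + ∑ i : Fin n, C (a i) * X i.castSucc)
    (hfin : Module.Finite K (MvPolynomial (Fin (n + 1)) K ⧸ I))
    (hdeg : F.natDegree = Module.finrank K (MvPolynomial (Fin (n + 1)) K ⧸ I))
    (hFr : Polynomial.aeval r F ∈ I)
    (hproper : ∀ H : Polynomial K, H ∣ F → 0 < H.natDegree → H.natDegree < F.natDegree →
      Polynomial.aeval r H ∉ I)
    (ψ : MvPolynomial (Fin (n + 1)) K →ₐ[K] MvPolynomial (Fin (n + 1)) K)
    (hψ₁ : ∀ i : Fin n, ψ (X i.castSucc) = X i.castSucc)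
    (hψ₂ : ψ (X (Fin.last n)) = 2 * X (Fin.last n) - r) :
    Ideal.comap (Polynomial.aeval (X (Fin.last n)) :
        Polynomial K →ₐ[K] MvPolynomial (Fin (n + 1)) K) (Ideal.map ψ I)
      = Ideal.span {F} := by
  classical
  -- the inverse automorphism
  set φ : MvPolynomial (Fin (n + 1)) K →ₐ[K] MvPolynomial (Fin (n + 1)) K :=
    aeval (Fin.lastCases r (fun j => X j.castSucc)) with hφdef
  have hφcast : ∀ j : Fin n, φ (X j.castSucc) = X j.castSucc := by
    intro j; simp [hφdef]
  have hφlast : φ (X (Fin.last n)) = r := by simp [hφdef]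
  have hψr : ψ r = X (Fin.last n) := by
    rw [hr, map_add, map_sum, hψ₂]
    have : ∀ i : Fin n, ψ (C (a i) * X i.castSucc) = C (a i) * X i.castSucc := by
      intro i; rw [map_mul, hψ₁, algHom_C, algebraMap_eq]
    simp only [this]
    rw [hr]; ring
  have hφr : φ r = r + ∑ i : Fin n, C (a i) * X i.castSucc := by
    conv_lhs => rw [hr]
    rw [map_add, map_sum, hφlast]
    congr 1
    refine Finset.sum_congr rfl fun i _ => ?_
    rw [map_mul, hφcast, algHom_C, algebraMap_eq]
  have hcomp : φ.comp ψ = AlgHom.id K _ := by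
    apply MvPolynomial.algHom_ext
    intro i
    refine Fin.lastCases ?_ (fun j => ?_) i
    · simp only [AlgHom.comp_apply, hψ₂, map_sub, map_mul, hφlast, AlgHom.id_apply, hφr]
      have : φ (2 : MvPolynomial (Fin (n + 1)) K) = 2 := by
        rw [map_ofNat]
      rw [this, hr]
      ring
    · simp only [AlgHom.comp_apply, hψ₁, hφcast, AlgHom.id_apply]
  have hcomp2 : ψ.comp φ = AlgHom.id K _ := by
    apply MvPolynomial.algHom_ext
    intro i
    refine Fin.lastCases ?_ (fun j => ?_) i
    · simp only [AlgHom.comp_apply, hφlast, hψr, AlgHom.id_apply]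
    · simp only [AlgHom.comp_apply, hφcast, hψ₁, AlgHom.id_apply]
  have hinj : Function.Injective ψ := by
    intro x y h
    have := congrArg φ h
    rw [← AlgHom.comp_apply, ← AlgHom.comp_apply, hcomp, AlgHom.id_apply, AlgHom.id_apply] at this
    exact this
  have hsurj : Function.Surjective ψ := by
    intro y
    exact ⟨φ y, by rw [← AlgHom.comp_apply, hcomp2, AlgHom.id_apply]⟩
  -- key membership for F
  have hFmem : Polynomial.aeval (X (Fin.last n) : MvPolynomial (Fin (n + 1)) K) F
      ∈ Ideal.map ψ I := by
    rw [← hψr, Polynomial.aeval_algHom_apply]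
    exact Ideal.mem_map_of_mem _ hFr
  apply le_antisymm
  · -- comap ≤ span {F}
    intro G hG
    rw [Ideal.mem_comap] at hG
    rw [Ideal.mem_span_singleton]
    set D := EuclideanDomain.gcd F G with hD
    have hDF : D ∣ F := EuclideanDomain.gcd_dvd_left F G
    have hDG : D ∣ G := EuclideanDomain.gcd_dvd_right F G
    have hF0 : F ≠ 0 := hmonic.ne_zero
    have hD0 : D ≠ 0 := fun h => hF0 ((EuclideanDomain.gcd_eq_zero_iff.mp h)).1
    have hmem : Polynomial.aeval (X (Fin.last n) : MvPolynomial (Fin (n + 1)) K) D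
        ∈ Ideal.map ψ I := by
      rw [hD, EuclideanDomain.gcd_eq_gcd_ab, map_add, map_mul, map_mul]
      exact Ideal.add_mem _ (Ideal.mul_mem_right _ _ hFmem) (Ideal.mul_mem_right _ _ hG)
    have hDr : Polynomial.aeval r D ∈ I := by
      rw [← hψr, Polynomial.aeval_algHom_apply] at hmem
      obtain ⟨q, hqI, hq⟩ := (Ideal.mem_map_iff_of_surjective ψ hsurj).mp hmem
      rwa [← hinj hq]
    rcases Nat.eq_zero_or_pos D.natDegree with h0 | hpos
    · -- D is a nonzero constant, so I = ⊤ and F = 1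
      have hc : D = Polynomial.C (D.coeff 0) := Polynomial.eq_C_of_natDegree_eq_zero h0
      have hc0 : D.coeff 0 ≠ 0 := by
        intro h; apply hD0; rw [hc, h, map_zero]
      have hIt : I = ⊤ := by
        apply Ideal.eq_top_of_isUnit_mem I (x := Polynomial.aeval r D) hDr
        rw [hc, Polynomial.aeval_C]
        exact (isUnit_iff_ne_zero.mpr hc0).map (algebraMap K _)
      have hsub : Subsingleton (MvPolynomial (Fin (n + 1)) K ⧸ I) := by
        rw [hIt]
        exact Submodule.Quotient.subsingleton_iff.mpr rfl
      have : F.natDegree = 0 := by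
        rw [hdeg]
        exact Module.finrank_zero_of_subsingleton
      have hF1 : F = 1 := hmonic.natDegree_eq_zero.mp this
      rw [hF1]; exact one_dvd G
    · have hle : D.natDegree ≤ F.natDegree := Polynomial.natDegree_le_of_dvd hDF hF0
      rcases lt_or_eq_of_le hle with hlt | heq
      · exact absurd hDr (hproper D hDF hpos hlt)
      · obtain ⟨E, hE⟩ := hDF
        have hE0 : E ≠ 0 := by
          rintro rfl; rw [mul_zero] at hE; exact hF0 hE
        have hEdeg : E.natDegree = 0 := by
          have h := Polynomial.natDegree_mul hD0 hE0
          rw [← hE] at h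
          omega
        have hEc : E = Polynomial.C (E.coeff 0) := Polynomial.eq_C_of_natDegree_eq_zero hEdeg
        have hEu : IsUnit E := by
          rw [hEc]
          exact Polynomial.isUnit_C.mpr (isUnit_iff_ne_zero.mpr (by
            intro h; apply hE0; rw [hEc, h, map_zero]))
        obtain ⟨E', hEE'⟩ := isUnit_iff_exists_inv.mp hEu
        have hFD : F ∣ D := ⟨E', by rw [hE, mul_assoc, hEE', mul_one]⟩
        exact hFD.trans hDG
  · rw [Ideal.span_le, Set.singleton_subset_iff]
    exact hFmem
end

section
/- Let K be a field, I ⊆ K[X] = K[x₁,…,x_n] an ideal, F ∈ K[T] monic and squarefree, and r = x_n + Σ_{i=1}^{n-1} aᵢxᵢ with a₁,…,a_{n-1} ∈ K. Assume deg(F) = dim_K(K[X]/I) (finite), F(r) ∈ I, and no proper factor of F(r) is in I. Let λ : K[X]/I → K[X]/I be the K-linear map given by multiplication with r, i.e. λ(g + I) = r·g + I. Then F is the characteristic polynomial of λ. -/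
open MvPolynomial

lemma monic_dvd_eq {K : Type*} [Field K] {p q : Polynomial K} (hp : p.Monic) (hq : q.Monic)
    (hdvd : p ∣ q) (hdeg : p.natDegree = q.natDegree) : p = q := by
  rcases hdvd with ⟨c, hc⟩
  have hc0 : c ≠ 0 := by
    rintro rfl; rw [mul_zero] at hc; exact hq.ne_zero hc
  have hcd : c.natDegree = 0 := by
    have h := Polynomial.natDegree_mul (p := p) (q := c) hp.ne_zero hc0
    rw [← hc, ← hdeg] at h
    omega
  have hclc : c.leadingCoeff = 1 := by
    have := hq.leadingCoeff
    rw [hc, Polynomial.leadingCoeff_mul, hp.leadingCoeff, one_mul] at this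
    exact this
  have : c = 1 := by
    rw [Polynomial.eq_C_of_natDegree_eq_zero hcd]
    rw [Polynomial.eq_C_of_natDegree_eq_zero hcd] at hclc
    simp at hclc
    simp [hclc]
  rw [hc, this, mul_one]

/-- **Lemma (3).** Let `K` be a field, `I ⊆ K[x₁,…,xₙ]` an ideal, `F ∈ K[T]` monic and
squarefree, `r = xₙ + Σ aᵢxᵢ` with `aᵢ ∈ K`, `deg F = dim_K K[X]/I` (finite), `F(r) ∈ I`
and no proper factor of `F(r)` in `I`. If `λ : K[X]/I → K[X]/I` is multiplication by `r`,
then `F` is the characteristic polynomial of `λ`. -/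
theorem statement10 (n : ℕ) (K : Type*) [Field K]
    (I : Ideal (MvPolynomial (Fin (n + 1)) K))
    (F : Polynomial K) (hmonic : F.Monic) (hsf : Squarefree F)
    (a : Fin n → K) (r : MvPolynomial (Fin (n + 1)) K)
    (hr : r = X (Fin.last n) + ∑ i : Fin n, C (a i) * X i.castSucc)
    [hfin : Module.Finite K (MvPolynomial (Fin (n + 1)) K ⧸ I)]
    (hdeg : F.natDegree = Module.finrank K (MvPolynomial (Fin (n + 1)) K ⧸ I))
    (hFr : Polynomial.aeval r F ∈ I)
    (hproper : ∀ H : Polynomial K, H ∣ F → 0 < H.natDegree → H.natDegree < F.natDegree →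
      Polynomial.aeval r H ∉ I) :
    (LinearMap.mulLeft K (Ideal.Quotient.mk I r)).charpoly = F := by
  set A := MvPolynomial (Fin (n + 1)) K ⧸ I
  set x : A := Ideal.Quotient.mk I r with hxdef
  set lam := LinearMap.mulLeft K x with hlam
  have key : ∀ p : Polynomial K,
      Polynomial.aeval x p = Ideal.Quotient.mk I (Polynomial.aeval r p) := by
    intro p
    rw [hxdef, ← Ideal.Quotient.mkₐ_eq_mk K I]
    exact Polynomial.aeval_algHom_apply (Ideal.Quotient.mkₐ K I) r p
  have hxF : Polynomial.aeval x F = 0 := by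
    rw [key, Ideal.Quotient.eq_zero_iff_mem]; exact hFr
  have hlam' : lam = Algebra.lmul K A x := rfl
  have keyL : ∀ p : Polynomial K,
      Polynomial.aeval lam p = LinearMap.mulLeft K (Polynomial.aeval x p) := by
    intro p
    have e : ∀ y : A, (Algebra.lmul K A) y = LinearMap.mulLeft K y := fun y => rfl
    rw [hlam', ← e]
    exact Polynomial.aeval_algHom_apply (Algebra.lmul K A) x p
  have hcp_deg : lam.charpoly.natDegree = F.natDegree := by
    rw [LinearMap.charpoly_natDegree, hdeg]
  have hcp_monic := lam.charpoly_monic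
  rcases Nat.eq_zero_or_pos F.natDegree with h0 | hpos
  · have hF1 : F = 1 := hmonic.natDegree_eq_zero.mp h0
    have hc1 : lam.charpoly = 1 :=
      hcp_monic.natDegree_eq_zero.mp (by rw [hcp_deg, h0])
    rw [hF1, hc1]
  · have hA : Nontrivial A := by
      have : 0 < Module.finrank K A := hdeg ▸ hpos
      exact Module.nontrivial_of_finrank_pos this
    have hxint : IsIntegral K x := ⟨F, hmonic, hxF⟩
    have hmdvd : minpoly K x ∣ F := minpoly.dvd K x hxF
    have hmmonic : (minpoly K x).Monic := minpoly.monic hxint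
    have hmpos : 0 < (minpoly K x).natDegree := minpoly.natDegree_pos hxint
    have hmI : Polynomial.aeval r (minpoly K x) ∈ I := by
      rw [← Ideal.Quotient.eq_zero_iff_mem, ← key]
      exact minpoly.aeval K x
    have hmdeg : (minpoly K x).natDegree = F.natDegree := by
      by_contra hne
      have hlt : (minpoly K x).natDegree < F.natDegree :=
        lt_of_le_of_ne (Polynomial.natDegree_le_of_dvd hmdvd hmonic.ne_zero) hne
      exact hproper _ hmdvd hmpos hlt hmI
    have hmF : minpoly K x = F := monic_dvd_eq hmmonic hmonic hmdvd hmdeg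
    -- F divides charpoly
    have hFlam : Polynomial.aeval lam F = 0 := by
      rw [keyL, hxF]
      exact LinearMap.mulLeft_zero_eq_zero _ _
    have hminlam_dvd : minpoly K lam ∣ lam.charpoly :=
      minpoly.dvd K lam lam.aeval_self_charpoly
    -- minpoly lam = minpoly x
    have hminlam_eq : minpoly K lam = minpoly K x := by
      have h1 : minpoly K lam ∣ minpoly K x := by
        apply minpoly.dvd
        rw [keyL, minpoly.aeval]
        exact LinearMap.mulLeft_zero_eq_zero _ _
      have h2 : minpoly K x ∣ minpoly K lam := by
        apply minpoly.dvd
        have := minpoly.aeval K lam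
        rw [keyL] at this
        rwa [LinearMap.mulLeft_eq_zero_iff] at this
      have hlint : IsIntegral K lam := ⟨F, hmonic, hFlam⟩
      exact Polynomial.eq_of_monic_of_associated (minpoly.monic hlint) hmmonic
        (associated_of_dvd_dvd h1 h2)
    have hFdvd : F ∣ lam.charpoly := by
      rw [← hmF, ← hminlam_eq]
      exact hminlam_dvd
    exact (monic_dvd_eq hmonic hcp_monic hFdvd hcp_deg.symm).symm
end

section
/- Let K be a field, I ⊆ K[X] = K[x₁,…,x_n] an ideal, and F ∈ K[x_n] monic with ⟨F⟩ = I ∩ K[x_n] and deg(F) = dim_K(K[X]/I) (in particular this dimension is finite). Then there exist polynomials h₁,…,h_{n-1} ∈ K[x_n] such that I = ⟨x₁ − h₁(x_n),…, x_{n-1} − h_{n-1}(x_n), F(x_n)⟩. -/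
open MvPolynomial

/-!
Since `F` generates the kernel of `K[t] → K[X]/I, t ↦ xₙ`, this map induces an injection
`K[t]/(F) → K[X]/I` between spaces of the same dimension `deg F`, hence a bijection; so
`xᵢ ≡ hᵢ(xₙ) mod I` for suitable `hᵢ`. Modulo the ideal `J` generated by the `xᵢ - hᵢ(xₙ)` and
`F(xₙ)`, every element is again a polynomial in `xₙ`. Thus `x ∈ I` gives `x ≡ p(xₙ) mod J ⊆ I`, so
`p ∈ (F)` and `x ∈ J`.
-/

theorem Polynomial.surjective_of_ker_eq_span_of_finrank_eq {K B : Type*} [Field K] [CommRing B]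
    [Algebra K B] [Module.Finite K B] {F : Polynomial K} (hF : F ≠ 0) (ψ : Polynomial K →ₐ[K] B)
    (hker : RingHom.ker ψ = Ideal.span {F}) (hdeg : F.natDegree = Module.finrank K B) :
    Function.Surjective ψ := by
  have hdim : Module.finrank K (Polynomial K ⧸ RingHom.ker ψ) = Module.finrank K B := by
    rw [hker, ← hdeg]
    exact (AdjoinRoot.powerBasis hF).finrank
  have : Module.Finite K (Polynomial K ⧸ RingHom.ker ψ) := by
    rw [hker]; exact (AdjoinRoot.powerBasis hF).finite
  have hlift : Function.Surjective (Ideal.kerLiftAlg ψ) :=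
    (LinearMap.injective_iff_surjective_of_finrank_eq_finrank
      (f := (Ideal.kerLiftAlg ψ).toLinearMap) hdim).mp (Ideal.kerLiftAlg_injective ψ)
  intro b
  obtain ⟨x, rfl⟩ := hlift b
  obtain ⟨p, rfl⟩ := Ideal.Quotient.mk_surjective x
  exact ⟨p, rfl⟩

theorem MvPolynomial.mkₐ_comp_aeval_surjective {σ R : Type*} [CommRing R]
    {J : Ideal (MvPolynomial σ R)} (a : MvPolynomial σ R) (g : σ → Polynomial R)
    (hg : ∀ j, X j - Polynomial.aeval a (g j) ∈ J) :
    Function.Surjective ((Ideal.Quotient.mkₐ R J).comp (Polynomial.aeval a)) := by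
  have hsection : ((Ideal.Quotient.mkₐ R J).comp (Polynomial.aeval a)).comp (aeval g) =
      Ideal.Quotient.mkₐ R J := by
    refine MvPolynomial.algHom_ext fun j => ?_
    simpa [Polynomial.aeval_algHom_apply, eq_comm] using Ideal.Quotient.eq.mpr (hg j)
  intro y
  obtain ⟨x, rfl⟩ := Ideal.Quotient.mk_surjective y
  exact ⟨aeval g x, by simpa using congr($hsection x)⟩

theorem Ideal.eq_of_le_of_comap_le_of_surjective {R A : Type*} [CommRing R] [CommRing A]
    (f : R →+* A) {I J : Ideal A} (hJI : J ≤ I) (hcomap : I.comap f ≤ J.comap f)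
    (hsurj : Function.Surjective ((Ideal.Quotient.mk J).comp f)) : J = I := by
  refine le_antisymm hJI fun x hx => ?_
  obtain ⟨p, hp⟩ := hsurj (Ideal.Quotient.mk J x)
  have hxp : x - f p ∈ J := Ideal.Quotient.eq.mp hp.symm
  have hp : f p ∈ J := hcomap (by simpa using I.sub_mem hx (hJI hxp))
  simpa using J.add_mem hxp hp

/-- Let `K` be a field, `I ⊆ K[x₁,…,xₙ]` an ideal, `F ∈ K[xₙ]` monic with `⟨F⟩ = I ∩ K[xₙ]`
and `deg F = dim_K K[X]/I` (finite). Then there are `h₁,…,h_{n-1} ∈ K[xₙ]` with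
`I = ⟨x₁ - h₁(xₙ), …, x_{n-1} - h_{n-1}(xₙ), F(xₙ)⟩`. -/
theorem statement12 (n : ℕ) (K : Type*) [Field K]
    (I : Ideal (MvPolynomial (Fin (n + 1)) K))
    (F : Polynomial K) (hmonic : F.Monic)
    (hF : Ideal.comap (Polynomial.aeval (X (Fin.last n)) :
        Polynomial K →ₐ[K] MvPolynomial (Fin (n + 1)) K) I = Ideal.span {F})
    (hfin : Module.Finite K (MvPolynomial (Fin (n + 1)) K ⧸ I))
    (hdeg : F.natDegree = Module.finrank K (MvPolynomial (Fin (n + 1)) K ⧸ I)) :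
    ∃ h : Fin n → Polynomial K,
      I = Ideal.span
        ((Set.range fun i : Fin n =>
            (X i.castSucc : MvPolynomial (Fin (n + 1)) K) -
              Polynomial.aeval (X (Fin.last n)) (h i)) ∪
          {Polynomial.aeval (X (Fin.last n) : MvPolynomial (Fin (n + 1)) K) F}) := by
  set φ : Polynomial K →ₐ[K] MvPolynomial (Fin (n + 1)) K := Polynomial.aeval (X (Fin.last n))
  have hker : RingHom.ker ((Ideal.Quotient.mkₐ K I).comp φ) = Ideal.span {F} := by
    rw [← hF]; ext p; simp [Ideal.Quotient.eq_zero_iff_mem]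
  choose h hh using fun i : Fin n =>
    Polynomial.surjective_of_ker_eq_span_of_finrank_eq hmonic.ne_zero _ hker hdeg
      (Ideal.Quotient.mk I (X i.castSucc))
  refine ⟨h, Eq.symm (Ideal.eq_of_le_of_comap_le_of_surjective φ.toRingHom ?_ ?_ ?_)⟩
  · rw [Ideal.span_le]
    rintro _ (⟨i, rfl⟩ | rfl)
    · exact Ideal.Quotient.eq.mp (hh i).symm
    · exact hF.ge (Ideal.mem_span_singleton_self F)
  · change I.comap φ ≤ _
    rw [hF, Ideal.span_singleton_le_iff_mem]
    exact Ideal.subset_span (Or.inr rfl)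
  · refine MvPolynomial.mkₐ_comp_aeval_surjective (X (Fin.last n))
      (Fin.lastCases Polynomial.X h) (Fin.lastCases ?_ fun i => ?_)
    · simp
    · rw [Fin.lastCases_castSucc]
      exact Ideal.subset_span (Or.inl ⟨i, rfl⟩)
end

section
/- Let K be a field, F ∈ K[x_n] monic and squarefree, and I = ⟨x₁ − h₁(x_n),…, x_{n-1} − h_{n-1}(x_n), F(x_n)⟩ ⊆ K[X] = K[x₁,…,x_n] for some h₁,…,h_{n-1} ∈ K[x_n]. Then I is a radical ideal. -/
open MvPolynomial

/-- Let `K` be a field, `F ∈ K[xₙ]` monic and squarefree, and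
`I = ⟨x₁ - h₁(xₙ), …, x_{n-1} - h_{n-1}(xₙ), F(xₙ)⟩ ⊆ K[x₁,…,xₙ]`.
Then `I` is a radical ideal. -/
theorem statement14 (n : ℕ) (K : Type*) [Field K]
    (F : Polynomial K) (hmonic : F.Monic) (hsf : Squarefree F)
    (h : Fin n → Polynomial K)
    (I : Ideal (MvPolynomial (Fin (n + 1)) K))
    (hI : I = Ideal.span
      ((Set.range fun i : Fin n =>
          (X i.castSucc : MvPolynomial (Fin (n + 1)) K) -
            Polynomial.aeval (X (Fin.last n)) (h i)) ∪
        {Polynomial.aeval (X (Fin.last n) : MvPolynomial (Fin (n + 1)) K) F})) :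
    I.IsRadical := by
  subst hI
  set S : Set (MvPolynomial (Fin (n + 1)) K) :=
      (Set.range fun i : Fin n =>
          (X i.castSucc : MvPolynomial (Fin (n + 1)) K) -
            Polynomial.aeval (X (Fin.last n)) (h i)) ∪
        {Polynomial.aeval (X (Fin.last n) : MvPolynomial (Fin (n + 1)) K) F} with hS
  set g : Fin (n + 1) → Polynomial K := fun i => Fin.lastCases Polynomial.X h i with hg
  have hg_last : g (Fin.last n) = Polynomial.X := Fin.lastCases_last ..
  have hg_cast : ∀ i : Fin n, g i.castSucc = h i := fun i => Fin.lastCases_castSucc ..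
  set φ : MvPolynomial (Fin (n + 1)) K →ₐ[K] Polynomial K := aeval g with hφ
  have hφlift : ∀ q : Polynomial K, φ (Polynomial.aeval (X (Fin.last n)) q) = q := by
    intro q
    have hcomp : φ.comp (Polynomial.aeval (X (Fin.last n))) = AlgHom.id K _ := by
      apply Polynomial.algHom_ext
      simp [hφ, hg_last]
    exact DFunLike.congr_fun hcomp q
  -- key lemma
  have hA : ∀ p : MvPolynomial (Fin (n + 1)) K,
      p - Polynomial.aeval (X (Fin.last n)) (φ p) ∈ Ideal.span S := by
    intro p
    induction p using MvPolynomial.induction_on with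
    | C a => simp [hφ]
    | add p q hp hq =>
      have := Ideal.add_mem _ hp hq
      convert this using 1
      rw [map_add, map_add]
      ring
    | mul_X p i hp =>
      have hXi : X i - Polynomial.aeval (X (Fin.last n)) (φ (X i)) ∈ Ideal.span S := by
        induction i using Fin.lastCases with
        | last =>
          simp [hφ, hg_last]
        | cast j =>
          have : φ (X (j.castSucc)) = h j := by simp [hφ, hg_cast]
          rw [this]
          exact Ideal.subset_span (Or.inl ⟨j, rfl⟩)
      have key : p * X i - Polynomial.aeval (X (Fin.last n)) (φ (p * X i)) =
          (p - Polynomial.aeval (X (Fin.last n)) (φ p)) * X i +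
            Polynomial.aeval (X (Fin.last n)) (φ p) *
              (X i - Polynomial.aeval (X (Fin.last n)) (φ (X i))) := by
        rw [map_mul, map_mul]; ring
      rw [key]
      exact Ideal.add_mem _ (Ideal.mul_mem_right _ _ hp) (Ideal.mul_mem_left _ _ hXi)
  have hFmem : Polynomial.aeval (X (Fin.last n) : MvPolynomial (Fin (n + 1)) K) F ∈
      Ideal.span S := Ideal.subset_span (Or.inr rfl)
  have hker : ∀ p : MvPolynomial (Fin (n + 1)) K, F ∣ φ p → p ∈ Ideal.span S := by
    intro p ⟨q, hq⟩
    have h2 : Polynomial.aeval (X (Fin.last n)) (φ p) ∈ Ideal.span S := by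
      rw [hq, map_mul]
      exact Ideal.mul_mem_right _ _ hFmem
    have := Ideal.add_mem _ (hA p) h2
    simpa using this
  have hmem : ∀ p ∈ Ideal.span S, F ∣ φ p := by
    intro p hp
    have hle : Ideal.span S ≤ Ideal.comap φ.toRingHom (Ideal.span {F}) := by
      rw [Ideal.span_le]
      rintro x (⟨i, rfl⟩ | rfl)
      · simp only [SetLike.mem_coe, Ideal.mem_comap, AlgHom.toRingHom_eq_coe, RingHom.coe_coe]
        rw [map_sub, hφlift]
        have : φ (X (i.castSucc)) = h i := by simp [hφ, hg_cast]
        rw [this, sub_self]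
        exact Ideal.zero_mem _
      · simp only [SetLike.mem_coe, Ideal.mem_comap, AlgHom.toRingHom_eq_coe, RingHom.coe_coe]
        rw [hφlift]
        exact Ideal.mem_span_singleton_self F
    have := hle hp
    rw [Ideal.mem_comap] at this
    exact (Ideal.mem_span_singleton).mp this
  intro p hp
  obtain ⟨k, hk⟩ := hp
  have h1 : F ∣ (φ p) ^ k := by
    rw [← map_pow]
    exact hmem _ hk
  exact hker p (hsf.isRadical k _ h1)
end

section
/- Let I ⊆ ℚ[X] = ℚ[x₁,…,x_m] be a homogeneous ideal generated by homogeneous polynomials f₁,…,f_r with integer coefficients, let p be a prime number, and let I_p = ⟨f₁ mod p,…, f_r mod p⟩ ⊆ 𝔽_p[X]. Then for every degree n, dim_{𝔽_p}(I_p[n]) ≤ dim_ℚ(I[n]); equivalently, dim_ℚ((ℚ[X]/I)_n) ≤ dim_{𝔽_p}((𝔽_p[X]/I_p)_n) for every n. -/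
/-!
Over any coefficient ring, the degree-`k` part of the ideal generated by homogeneous `gᵢ` of
degrees `dᵢ` is spanned by the finitely many products `x^μ * gᵢ` with `|μ| + dᵢ = k`. Hence
`dim I_p[k]` and `dim I[k]` are the ranks of the images of one finite family of integer
polynomials, under reduction mod `p` and under the inclusion into `ℚ[X]`. A family whose
reductions mod `p` are linearly independent is linearly independent over `ℤ`, hence over `ℚ`.
-/

open MvPolynomial

section DegreePieces

variable {σ ι R : Type*} [CommSemiring R]

noncomputable def monomialMultiples (g : ι → MvPolynomial σ R) (d : ι → ℕ) (k : ℕ) :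
    {q : ι × (σ →₀ ℕ) // q.2.degree + d q.1 = k} → MvPolynomial σ R :=
  fun q => monomial q.1.2 1 * g q.1.1

theorem finite_monomialMultiples_index [Finite σ] [Finite ι] (d : ι → ℕ) (k : ℕ) :
    Finite {q : ι × (σ →₀ ℕ) // q.2.degree + d q.1 = k} := by
  refine Set.Finite.to_subtype
    ((Set.finite_univ.prod (Finsupp.finite_of_degree_le k)).subset ?_)
  rintro ⟨i, μ⟩ hq
  exact ⟨Set.mem_univ i, (Nat.le_add_right _ _).trans_eq hq⟩

theorem monomialMultiples_map {S : Type*} [CommSemiring S] (φ : R →+* S)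
    (g : ι → MvPolynomial σ R) (d : ι → ℕ) (k : ℕ) :
    monomialMultiples (fun i => map φ (g i)) d k = map φ ∘ monomialMultiples g d k := by
  ext1 q
  simp [monomialMultiples, map_monomial]

theorem homogeneousComponent_mul_mem_span_monomial_mul {q : MvPolynomial σ R} {e : ℕ}
    (hq : q.IsHomogeneous e) (c : MvPolynomial σ R) (k : ℕ) :
    homogeneousComponent k (c * q) ∈
      Submodule.span R {x | ∃ μ : σ →₀ ℕ, μ.degree + e = k ∧ x = monomial μ 1 * q} := by
  induction c using MvPolynomial.induction_on' with
  | monomial μ a =>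
    have hhom : (monomial μ 1 * q).IsHomogeneous (μ.degree + e) :=
      (isHomogeneous_monomial 1 rfl).mul hq
    rw [show monomial μ a * q = a • (monomial μ 1 * q) by
      rw [← smul_mul_assoc, smul_monomial, smul_eq_mul, mul_one], map_smul,
      homogeneousComponent_of_mem hhom]
    split_ifs with hk
    · exact Submodule.smul_mem _ _ (Submodule.subset_span ⟨μ, hk.symm, rfl⟩)
    · rw [smul_zero]
      exact Submodule.zero_mem _
  | add c₁ c₂ h₁ h₂ =>
    rw [add_mul, map_add]
    exact add_mem h₁ h₂

theorem span_inf_homogeneousSubmodule_eq_span_monomialMultiples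
    (g : ι → MvPolynomial σ R) (d : ι → ℕ) (hg : ∀ i, (g i).IsHomogeneous (d i)) (k : ℕ) :
    Submodule.restrictScalars R (Ideal.span (Set.range g)) ⊓ homogeneousSubmodule σ R k =
      Submodule.span R (Set.range (monomialMultiples g d k)) := by
  apply le_antisymm
  · rintro x ⟨hxI, hxk⟩
    obtain ⟨c, rfl⟩ := Finsupp.mem_span_range_iff_exists_finsupp.mp hxI
    rw [← homogeneousComponent_eq_self hxk, Finsupp.sum, map_sum]
    refine Submodule.sum_mem _ fun i _ => Submodule.span_mono ?_
      (homogeneousComponent_mul_mem_span_monomial_mul (hg i) (c i) k)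
    rintro _ ⟨μ, hk, rfl⟩
    exact ⟨⟨(i, μ), hk⟩, rfl⟩
  · rw [Submodule.span_le]
    rintro _ ⟨⟨⟨i, μ⟩, hk⟩, rfl⟩
    refine ⟨Ideal.mul_mem_left _ _ (Ideal.subset_span ⟨i, rfl⟩), ?_⟩
    have hhom := (isHomogeneous_monomial (d := μ) (1 : R) rfl).mul (hg i)
    rwa [hk] at hhom

end DegreePieces

section Reduction

variable {p : ℕ} {M N : Type*} [AddCommGroup M] [AddCommGroup N] [Module (ZMod p) N]

/-- Divided by the gcd of its coefficients, an integer relation among the `u i` reduces mod `p`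
to a nontrivial relation among the `π (u i)`. -/
theorem linearIndependent_int_of_linearIndependent_zmod [IsAddTorsionFree M] (hp : p ≠ 1)
    (π : M →+ N) {ι : Type*} {u : ι → M} (h : LinearIndependent (ZMod p) (π ∘ u)) :
    LinearIndependent ℤ u := by
  rw [linearIndependent_iff'] at h ⊢
  intro s c hrel i hi
  by_contra hci
  have hgcd : s.gcd c ≠ 0 := fun h0 => hci (Finset.gcd_eq_zero_iff.mp h0 i hi)
  obtain ⟨c', hc', hc'gcd⟩ := Finset.extract_gcd c ⟨i, hi⟩
  have hrel' : ∑ j ∈ s, c' j • u j = 0 := by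
    refine (smul_eq_zero.mp ?_).resolve_left hgcd
    rw [Finset.smul_sum, ← hrel]
    exact Finset.sum_congr rfl fun j hj => by rw [smul_smul, ← hc' j hj]
  have hmod : ∀ j ∈ s, ((c' j : ℤ) : ZMod p) = 0 := by
    refine h s (fun j => (c' j : ZMod p)) ?_
    simpa only [map_sum, map_zsmul, Int.cast_smul_eq_zsmul, Function.comp_apply, map_zero]
      using congrArg π hrel'
  have hdvd : (p : ℤ) ∣ s.gcd c' :=
    Finset.dvd_gcd fun j hj => (ZMod.intCast_zmod_eq_zero_iff_dvd _ p).mp (hmod j hj)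
  rw [hc'gcd] at hdvd
  exact hp (by exact_mod_cast Int.eq_one_of_dvd_one (by positivity) hdvd)

variable {V : Type*} [AddCommGroup V] [Module ℚ V]

theorem finrank_span_zmod_le_finrank_span_rat [Fact p.Prime] {κ : Type*} [Finite κ]
    (π : M →+ N) (ι : M →+ V) (hι : Function.Injective ι) (v : κ → M) :
    Module.finrank (ZMod p) (Submodule.span (ZMod p) (Set.range (π ∘ v))) ≤
      Module.finrank ℚ (Submodule.span ℚ (Set.range (ι ∘ v))) := by
  have : Module.Finite ℚ (Submodule.span ℚ (Set.range (ι ∘ v))) :=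
    FiniteDimensional.span_of_finite ℚ (Set.finite_range _)
  obtain ⟨κ', a, ha, hspan, hli⟩ := exists_linearIndependent' (ZMod p) (π ∘ v)
  have : Finite κ' := Finite.of_injective a ha
  have : Fintype κ' := Fintype.ofFinite κ'
  have : IsAddTorsionFree V := .of_module_rat V
  have : IsAddTorsionFree M := hι.isAddTorsionFree ι
  have hZ : LinearIndependent ℤ (v ∘ a) :=
    linearIndependent_int_of_linearIndependent_zmod (Fact.out : p.Prime).ne_one π hli
  have hQ : LinearIndependent ℚ (ι ∘ v ∘ a) :=
    (LinearIndependent.iff_fractionRing ℤ ℚ).mp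
      (hZ.map' ι.toIntLinearMap (LinearMap.ker_eq_bot.mpr hι))
  calc Module.finrank (ZMod p) (Submodule.span (ZMod p) (Set.range (π ∘ v)))
      = Fintype.card κ' := by rw [← hspan]; exact finrank_span_eq_card hli
    _ = Module.finrank ℚ (Submodule.span ℚ (Set.range (ι ∘ v ∘ a))) :=
        (finrank_span_eq_card hQ).symm
    _ ≤ Module.finrank ℚ (Submodule.span ℚ (Set.range (ι ∘ v))) :=
        Submodule.finrank_mono (Submodule.span_mono (Set.range_comp_subset_range a (ι ∘ v)))

end Reduction

/-- Let `I ⊆ ℚ[x₁,…,x_m]` be a homogeneous ideal generated by homogeneous polynomials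
`f₁,…,f_r` with integer coefficients, `p` a prime, and `I_p ⊆ 𝔽_p[X]` the ideal generated
by the reductions of the `fᵢ` mod `p`. Then for every degree `k`,
`dim_{𝔽_p} I_p[k] ≤ dim_ℚ I[k]`, where `J[k]` is the space of homogeneous degree-`k`
elements of `J`. -/
theorem statement15 (m r : ℕ) (f : Fin r → MvPolynomial (Fin m) ℤ)
    (d : Fin r → ℕ) (hhom : ∀ i, (f i).IsHomogeneous (d i))
    (p : ℕ) (hp : p.Prime)
    (I : Ideal (MvPolynomial (Fin m) ℚ))
    (hI : I = Ideal.span (Set.range fun i => MvPolynomial.map (Int.castRingHom ℚ) (f i)))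
    (Ip : Ideal (MvPolynomial (Fin m) (ZMod p)))
    (hIp : Ip = Ideal.span
      (Set.range fun i => MvPolynomial.map (Int.castRingHom (ZMod p)) (f i))) :
    ∀ k : ℕ,
      Module.finrank (ZMod p)
        ↥(Submodule.restrictScalars (ZMod p) Ip ⊓ homogeneousSubmodule (Fin m) (ZMod p) k) ≤
      Module.finrank ℚ
        ↥(Submodule.restrictScalars ℚ I ⊓ homogeneousSubmodule (Fin m) ℚ k) := by
  intro k
  have : Fact p.Prime := ⟨hp⟩
  have := finite_monomialMultiples_index (σ := Fin m) d k
  have hinj : Function.Injective (map (Int.castRingHom ℚ) : MvPolynomial (Fin m) ℤ → _) :=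
    map_injective _ Int.cast_injective
  rw [hI, hIp,
    span_inf_homogeneousSubmodule_eq_span_monomialMultiples _ d fun i => (hhom i).map _,
    span_inf_homogeneousSubmodule_eq_span_monomialMultiples _ d fun i => (hhom i).map _,
    monomialMultiples_map, monomialMultiples_map]
  exact finrank_span_zmod_le_finrank_span_rat (map (Int.castRingHom (ZMod p))).toAddMonoidHom
    (map (Int.castRingHom ℚ)).toAddMonoidHom hinj (monomialMultiples f d k)
end

section
/- Let I ⊆ ℚ[X] = ℚ[x₁,…,x_n] be a zero-dimensional ideal with associated primes M₁,…,M_s, and let σ₁,…,σ_s ∈ ℚ[X] be a system of separators, i.e. σᵢ ∉ Mᵢ and σᵢ ∈ M_j for all j ≠ i. Then for each i, the saturation I : σᵢ^∞ is an Mᵢ-primary ideal, and I = ⋂_{i=1}^{s} (I : σᵢ^∞) is a primary decomposition of I. -/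
/-!
Every associated prime of `R ⧸ I` contains `I`, and a nonzero class `f + I` is annihilated
only by elements of some associated prime. Hence `f σⱼᵏ ∈ I` with `σⱼ ∉ Mⱼ` for every `j`
forces `f ∈ I`, which gives `I = ⋂ᵢ (I : σᵢ^∞)`. Conversely, for `f ∈ Mᵢ` the product `σᵢ f`
lies in every associated prime, hence in every minimal prime over `I`, so some power of it
lies in `I`; thus `√(I : σᵢ^∞) = Mᵢ`. For zero-dimensional `I` the ring `R ⧸ I` is Artinian,
so `Mᵢ` is maximal and an ideal with maximal radical is primary.
-/

section AssociatedPrimes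

variable {R : Type*} [CommRing R] {I P : Ideal R}

theorem Ideal.mem_iSup_colon_span_pow_iff {a f : R} :
    f ∈ ⨆ k : ℕ, Submodule.colon I (Ideal.span {a ^ k}) ↔ ∃ k, f * a ^ k ∈ I := by
  have hmono : Monotone fun k : ℕ => Submodule.colon I (Ideal.span {a ^ k}) := by
    intro k l hkl g hg
    rw [Ideal.mem_colon_span_singleton] at hg ⊢
    rw [← Nat.add_sub_cancel' hkl, pow_add, ← mul_assoc]
    exact I.mul_mem_right _ hg
  rw [Submodule.mem_iSup_of_directed _ hmono.directed_le]
  simp only [Ideal.mem_colon_span_singleton]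

theorem IsAssociatedPrime.le_of_quotient (h : IsAssociatedPrime P (R ⧸ I)) : I ≤ P := by
  simpa [Submodule.annihilator_top, Ideal.annihilator_quotient] using h.annihilator_le

theorem IsAssociatedPrime.isMaximal_of_quotient [IsArtinianRing (R ⧸ I)]
    (h : IsAssociatedPrime P (R ⧸ I)) : P.IsMaximal := by
  have := h.isPrime
  have : IsArtinianRing (R ⧸ P) :=
    (Ideal.Quotient.factor_surjective h.le_of_quotient).isArtinianRing
  exact Ideal.Quotient.maximal_of_isField _ (IsArtinianRing.isField_of_isDomain _)

variable [IsNoetherianRing R]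

theorem exists_isAssociatedPrime_quotient_of_notMem {f : R} (hf : f ∉ I) :
    ∃ P, IsAssociatedPrime P (R ⧸ I) ∧ ∀ r, r * f ∈ I → r ∈ P := by
  have hne : (Ideal.Quotient.mk I f) ≠ 0 := by rwa [Ne, Ideal.Quotient.eq_zero_iff_mem]
  obtain ⟨P, hP, hle⟩ := exists_le_isAssociatedPrime_of_isNoetherianRing R _ hne
  refine ⟨P, hP, fun r hr => hle ?_⟩
  rw [Submodule.mem_colon_singleton, Submodule.mem_bot]
  exact (Ideal.Quotient.eq_zero_iff_mem).mpr hr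

theorem Ideal.mem_radical_of_forall_isAssociatedPrime_quotient {t : R}
    (ht : ∀ P, IsAssociatedPrime P (R ⧸ I) → t ∈ P) : t ∈ I.radical := by
  rw [← Ideal.sInf_minimalPrimes]
  refine Submodule.mem_sInf.mpr fun P hP => ht P ?_
  apply Module.associatedPrimes.minimalPrimes_annihilator_subset_associatedPrimes R (R ⧸ I)
  rwa [Ideal.annihilator_quotient]

end AssociatedPrimes

section Separators

variable {R ι : Type*} [CommRing R] [IsNoetherianRing R] {I : Ideal R} {M : ι → Ideal R}
  {σ : ι → R}

theorem radical_iSup_colon_span_pow_eq_of_separator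
    (hM : associatedPrimes R (R ⧸ I) = Set.range M) {i : ι} (hσ₁ : σ i ∉ M i)
    (hσ₂ : ∀ j, j ≠ i → σ i ∈ M j) :
    (⨆ k : ℕ, Submodule.colon I (Ideal.span {σ i ^ k})).radical = M i := by
  have hassoc : IsAssociatedPrime (M i) (R ⧸ I) :=
    (hM.symm ▸ Set.mem_range_self i : M i ∈ associatedPrimes R (R ⧸ I))
  have hprime := hassoc.isPrime
  apply le_antisymm
  · rintro f ⟨m, hm⟩
    obtain ⟨k, hk⟩ := Ideal.mem_iSup_colon_span_pow_iff.mp hm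
    rcases hprime.mul_mem_iff_mem_or_mem.mp (hassoc.le_of_quotient hk) with h | h
    · exact hprime.mem_of_pow_mem m h
    · exact absurd (hprime.mem_of_pow_mem k h) hσ₁
  · intro f hf
    have hσf : σ i * f ∈ I.radical := by
      refine Ideal.mem_radical_of_forall_isAssociatedPrime_quotient fun P hP => ?_
      obtain ⟨j, rfl⟩ : P ∈ Set.range M := hM ▸ hP
      by_cases hji : j = i
      · subst hji
        exact (M j).mul_mem_left _ hf
      · exact (M j).mul_mem_right _ (hσ₂ j hji)
    obtain ⟨N, hN⟩ := hσf
    exact ⟨N, Ideal.mem_iSup_colon_span_pow_iff.mpr ⟨N, by rwa [← mul_pow, mul_comm]⟩⟩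

theorem eq_iInf_iSup_colon_span_pow_of_forall_notMem
    (hM : associatedPrimes R (R ⧸ I) = Set.range M) (hσ : ∀ i, σ i ∉ M i) :
    I = ⨅ i, ⨆ k : ℕ, Submodule.colon I (Ideal.span {σ i ^ k}) := by
  refine le_antisymm (le_iInf fun i f hf => ?_) fun f hf => ?_
  · exact Ideal.mem_iSup_colon_span_pow_iff.mpr ⟨0, by simpa using hf⟩
  · by_contra hfI
    obtain ⟨P, hP, hann⟩ := exists_isAssociatedPrime_quotient_of_notMem hfI
    obtain ⟨j, rfl⟩ : P ∈ Set.range M := hM ▸ hP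
    obtain ⟨k, hk⟩ := Ideal.mem_iSup_colon_span_pow_iff.mp ((Submodule.mem_iInf _).mp hf j)
    exact hσ j (hP.isPrime.mem_of_pow_mem k (hann _ (by rwa [mul_comm])))

end Separators

/-- **Remark (Shimoyama–Yokoyama).** Let `I ⊆ ℚ[x₁,…,xₙ]` be zero-dimensional with
associated primes `M₁,…,M_s` and separators `σ₁,…,σ_s` (`σᵢ ∉ Mᵢ`, `σᵢ ∈ M_j` for `j ≠ i`).
Then each saturation `I : σᵢ^∞` (rendered as `⨆ k, (I : ⟨σᵢᵏ⟩)`) is an `Mᵢ`-primary ideal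
and `I = ⋂ᵢ (I : σᵢ^∞)` is a primary decomposition. -/
theorem statement17 (n s : ℕ) (I : Ideal (MvPolynomial (Fin n) ℚ))
    (hfin : Module.Finite ℚ (MvPolynomial (Fin n) ℚ ⧸ I))
    (M : Fin s → Ideal (MvPolynomial (Fin n) ℚ))
    (hM : associatedPrimes (MvPolynomial (Fin n) ℚ) (MvPolynomial (Fin n) ℚ ⧸ I)
      = Set.range M)
    (σ : Fin s → MvPolynomial (Fin n) ℚ)
    (hσ₁ : ∀ i, σ i ∉ M i)
    (hσ₂ : ∀ i j, j ≠ i → σ i ∈ M j) :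
    (∀ i, (⨆ k : ℕ, Submodule.colon I (Ideal.span {σ i ^ k})).IsPrimary ∧
      (⨆ k : ℕ, Submodule.colon I (Ideal.span {σ i ^ k})).radical = M i) ∧
    I = ⨅ i : Fin s, ⨆ k : ℕ, Submodule.colon I (Ideal.span {σ i ^ k}) := by
  have : IsArtinianRing (MvPolynomial (Fin n) ℚ ⧸ I) := IsArtinianRing.of_finite ℚ _
  refine ⟨fun i => ?_, eq_iInf_iSup_colon_span_pow_of_forall_notMem hM hσ₁⟩
  have hrad := radical_iSup_colon_span_pow_eq_of_separator hM (hσ₁ i) (hσ₂ i)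
  have hassoc : IsAssociatedPrime (M i) (MvPolynomial (Fin n) ℚ ⧸ I) :=
    (hM.symm ▸ Set.mem_range_self i : M i ∈ associatedPrimes _ _)
  exact ⟨Ideal.isPrimary_of_isMaximal_radical (hrad ▸ hassoc.isMaximal_of_quotient), hrad⟩
end
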